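/- arXiv:1604.01743 — 10 statements merged into one kernel-verified Lean document; each statement's English description precedes it below -/
import Mathlib

section
/- Let E be a Banach space and (T_t)_{t ∈ (0,∞)} a semigroup of bounded operators on E which is locally bounded at 0 (i.e. sup_{t ∈ (0,c]} ‖T_t‖ < ∞ for some c > 0). Then (T_t) converges strongly as t → ∞ if and only if for every t > 0 the discrete semigroup (T_{tn})_{n ∈ ℕ} converges strongly as n → ∞; in that case all limits coincide. -/
open Filter Topology

section aux
variable {𝕜 : Type*} [RCLike 𝕜] {E : Type*} [NormedAddCommGroup E] [NormedSpace 𝕜 E]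
  [CompleteSpace E]

lemma SGaux.tendsto_mul_nat {t : ℝ} (ht : 0 < t) :
    Tendsto (fun n : ℕ => t * (n : ℝ)) atTop atTop :=
  tendsto_natCast_atTop_atTop.const_mul_atTop ht

/-- Bound on `(0,1]` from local boundedness at `0`. -/
lemma SGaux.bound (T : ℝ → E →L[𝕜] E)
    (hsg : ∀ s t : ℝ, 0 < s → 0 < t → T (s + t) = (T s).comp (T t))
    (hloc : ∃ c > 0, ∃ M : ℝ, ∀ t : ℝ, 0 < t → t ≤ c → ‖T t‖ ≤ M) :
    ∃ K : ℝ, 1 ≤ K ∧ ∀ s : ℝ, 0 < s → s ≤ 1 → ‖T s‖ ≤ K := by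
  obtain ⟨c, hc, M, hM⟩ := hloc
  set M' := max M 1 with hM'def
  have hM'1 : 1 ≤ M' := le_max_right _ _
  have hM'0 : 0 ≤ M' := by linarith
  have key : ∀ k : ℕ, ∀ t : ℝ, 0 < t → t ≤ (k + 1) * c → ‖T t‖ ≤ M' ^ (k + 1) := by
    intro k
    induction k with
    | zero =>
      intro t ht htc
      have htc' : t ≤ c := by push_cast at htc; linarith
      calc ‖T t‖ ≤ M := hM t ht htc'
        _ ≤ M' := le_max_left M 1
        _ = M' ^ (0+1) := (pow_one M').symm
    | succ k ih =>
      intro t ht htc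
      by_cases hcase : t ≤ (k + 1) * c
      · exact (ih t ht hcase).trans (pow_le_pow_right₀ hM'1 (by omega))
      · push_neg at hcase
        have hk0 : (0:ℝ) ≤ (k:ℝ) * c := by positivity
        have h1 : 0 < t - c := by nlinarith
        have h2 : t - c ≤ (k + 1) * c := by push_cast at htc ⊢; linarith
        have hTt : T t = (T c).comp (T (t - c)) := by
          have := hsg c (t - c) hc h1
          rwa [add_sub_cancel] at this
        have hc' : ‖T c‖ ≤ M' := (hM c hc le_rfl).trans (le_max_left _ _)
        calc ‖T t‖ = ‖(T c).comp (T (t - c))‖ := by rw [hTt]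
          _ ≤ ‖T c‖ * ‖T (t - c)‖ := ContinuousLinearMap.opNorm_comp_le _ _
          _ ≤ M' * M' ^ (k + 1) := by
              apply mul_le_mul hc' (ih (t - c) h1 h2) (norm_nonneg _) hM'0
          _ = M' ^ (k + 1 + 1) := by ring
  set k := ⌈1 / c⌉₊ with hk
  refine ⟨M' ^ (k + 1), one_le_pow₀ hM'1, fun s hs hs1 => ?_⟩
  apply key k s hs
  have h1c : 1 / c ≤ (k : ℝ) := Nat.le_ceil _
  have : 1 ≤ (k : ℝ) * c := by
    rw [div_le_iff₀ hc] at h1c; linarith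
  nlinarith

/-- `T t` fixes the limit of its own discrete orbit. -/
lemma SGaux.T_fix_limit (T : ℝ → E →L[𝕜] E)
    (hsg : ∀ s t : ℝ, 0 < s → 0 < t → T (s + t) = (T s).comp (T t))
    {t : ℝ} (ht : 0 < t) {Q : E →L[𝕜] E}
    (hQ : ∀ x : E, Tendsto (fun n : ℕ => T (t * n) x) atTop (𝓝 (Q x))) (y : E) :
    T t (Q y) = Q y := by
  have h1 : Tendsto (fun n : ℕ => T (t * ((n:ℝ) + 1)) y) atTop (𝓝 (Q y)) := by
    have := (hQ y).comp (tendsto_add_atTop_nat 1)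
    simpa [Function.comp_def] using this
  have h2 : Tendsto (fun n : ℕ => T t (T (t * ((n:ℝ) + 1)) y)) atTop (𝓝 (T t (Q y))) :=
    ((T t).continuous.tendsto (Q y)).comp h1
  have h3 : (fun n : ℕ => T t (T (t * ((n:ℝ) + 1)) y))
      = fun n : ℕ => T (t * ((n:ℝ) + 2)) y := by
    funext n
    have hpos : 0 < t * ((n:ℝ) + 1) := by positivity
    have := hsg t (t * ((n:ℝ) + 1)) ht hpos
    have harg : t + t * ((n:ℝ) + 1) = t * ((n:ℝ) + 2) := by ring
    rw [harg] at this
    rw [this]; rfl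
  rw [h3] at h2
  have h4 : Tendsto (fun n : ℕ => T (t * ((n:ℝ) + 2)) y) atTop (𝓝 (Q y)) := by
    have := (hQ y).comp (tendsto_add_atTop_nat 2)
    simpa [Function.comp_def] using this
  exact tendsto_nhds_unique h2 h4

/-- Key claim: a fixed point of `T 1` is fixed by every `T u`. -/
lemma SGaux.fix (T : ℝ → E →L[𝕜] E)
    (hsg : ∀ s t : ℝ, 0 < s → 0 < t → T (s + t) = (T s).comp (T t))
    (h : ∀ t : ℝ, 0 < t → ∃ Q : E →L[𝕜] E,
        ∀ x : E, Tendsto (fun n : ℕ => T (t * n) x) atTop (𝓝 (Q x)))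
    {x : E} (hx : T 1 x = x) {u : ℝ} (hu : 0 < u) : T u x = x := by
  -- integers fix x
  have hfix : ∀ j : ℕ, T ((j:ℝ) + 1) x = x := by
    intro j
    induction j with
    | zero => simpa using hx
    | succ j ih =>
      have hpos : (0:ℝ) < (j:ℝ) + 1 := by positivity
      have := hsg 1 ((j:ℝ) + 1) one_pos hpos
      have harg : (1:ℝ) + ((j:ℝ) + 1) = ((j:ℝ) + 1) + 1 := by ring
      rw [harg] at this
      push_cast
      rw [this]
      show T 1 (T ((j:ℝ)+1) x) = x
      rw [ih, hx]
  have hfix' : ∀ j : ℕ, 1 ≤ j → T (j:ℝ) x = x := by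
    intro j hj
    obtain ⟨i, rfl⟩ := Nat.exists_eq_add_of_le' hj
    have := hfix i
    push_cast
    push_cast at this
    exact this
  obtain ⟨m, hm⟩ := exists_nat_gt u
  have hm1 : 1 ≤ m := by
    by_contra hc
    push_neg at hc
    interval_cases m
    · simp at hm; linarith
  set s : ℝ := (m:ℝ) - u with hsdef
  have hs : 0 < s := by simp [hsdef]; linarith
  obtain ⟨Qs, hQs⟩ := h s hs
  obtain ⟨Qu, hQu⟩ := h u hu
  -- Banach–Steinhaus for the family T (u * n)
  obtain ⟨C, hC⟩ : ∃ C, ∀ n : ℕ, ‖T (u * n)‖ ≤ C := by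
    apply banach_steinhaus (g := fun n : ℕ => T (u * n))
    intro y
    obtain ⟨C, hC⟩ := (hQu y).norm.bddAbove_range
    exact ⟨C, fun n => hC (Set.mem_range_self n)⟩
  set C' : ℝ := max C 0 with hC'def
  have hC'0 : 0 ≤ C' := le_max_right _ _
  have hC' : ∀ n : ℕ, ‖T (u * n)‖ ≤ C' := fun n => (hC n).trans (le_max_left _ _)
  -- T(u(n+1)) (T(s(n+1)) x) = x
  have hkey : ∀ n : ℕ, T (u * ((n:ℝ) + 1)) (T (s * ((n:ℝ) + 1)) x) = x := by
    intro n
    have hpu : 0 < u * ((n:ℝ) + 1) := by positivity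
    have hps : 0 < s * ((n:ℝ) + 1) := by positivity
    have hsg' := hsg (u * ((n:ℝ) + 1)) (s * ((n:ℝ) + 1)) hpu hps
    have harg : u * ((n:ℝ) + 1) + s * ((n:ℝ) + 1) = ((m * (n + 1) : ℕ) : ℝ) := by
      push_cast; simp [hsdef]; ring
    rw [harg] at hsg'
    have hmx : T ((m * (n + 1) : ℕ) : ℝ) x = x :=
      hfix' _ (Nat.one_le_iff_ne_zero.mpr (by positivity))
    calc T (u * ((n:ℝ) + 1)) (T (s * ((n:ℝ) + 1)) x)
        = ((T (u * ((n:ℝ) + 1))).comp (T (s * ((n:ℝ) + 1)))) x := rfl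
      _ = T ((m * (n + 1) : ℕ) : ℝ) x := by rw [hsg']
      _ = x := hmx
  -- T(u(n+1)) (Qs x) → x
  have hz : Tendsto (fun n : ℕ => T (s * ((n:ℝ) + 1)) x) atTop (𝓝 (Qs x)) := by
    have := (hQs x).comp (tendsto_add_atTop_nat 1)
    simpa [Function.comp_def] using this
  have hto0 : Tendsto (fun n : ℕ => ‖T (u * ((n:ℝ) + 1)) (Qs x) - x‖) atTop (𝓝 0) := by
    apply squeeze_zero (fun n => norm_nonneg _)
      (g := fun n : ℕ => C' * ‖Qs x - T (s * ((n:ℝ) + 1)) x‖)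
    · intro n
      have : T (u * ((n:ℝ) + 1)) (Qs x) - x
          = T (u * ((n:ℝ) + 1)) (Qs x - T (s * ((n:ℝ) + 1)) x) := by
        rw [map_sub, hkey n]
      rw [this]
      calc ‖T (u * ((n:ℝ) + 1)) (Qs x - T (s * ((n:ℝ) + 1)) x)‖
          ≤ ‖T (u * ((n:ℝ) + 1))‖ * ‖Qs x - T (s * ((n:ℝ) + 1)) x‖ :=
            (T _).le_opNorm _
        _ ≤ C' * ‖Qs x - T (s * ((n:ℝ) + 1)) x‖ := by
            apply mul_le_mul_of_nonneg_right _ (norm_nonneg _)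
            have := hC' (n + 1)
            push_cast at this
            exact this
    · have : Tendsto (fun n : ℕ => ‖Qs x - T (s * ((n:ℝ) + 1)) x‖) atTop (𝓝 0) := by
        have h0 := tendsto_iff_norm_sub_tendsto_zero.mp hz
        simpa [norm_sub_rev] using h0
      simpa using this.const_mul C'
  have hlim1 : Tendsto (fun n : ℕ => T (u * ((n:ℝ) + 1)) (Qs x)) atTop (𝓝 x) :=
    tendsto_iff_norm_sub_tendsto_zero.mpr hto0
  have hlim2 : Tendsto (fun n : ℕ => T (u * ((n:ℝ) + 1)) (Qs x)) atTop (𝓝 (Qu (Qs x))) := by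
    have := (hQu (Qs x)).comp (tendsto_add_atTop_nat 1)
    simpa [Function.comp_def] using this
  have hQux : Qu (Qs x) = x := tendsto_nhds_unique hlim2 hlim1
  have := SGaux.T_fix_limit T hsg hu hQu (Qs x)
  rw [hQux] at this
  exact this

end aux

/-- A semigroup `(T_t)_{t ∈ (0,∞)}` on a Banach space which is locally bounded at `0`
converges strongly as `t → ∞` if and only if for every `t > 0` the embedded discrete
semigroup `(T_{tn})_{n ∈ ℕ}` converges strongly as `n → ∞`; in that case all limits
coincide. -/
theorem strong_convergence_iff_discrete_semigroups_converge
    {𝕜 : Type*} [RCLike 𝕜] {E : Type*} [NormedAddCommGroup E] [NormedSpace 𝕜 E]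
    [CompleteSpace E]
    (T : ℝ → E →L[𝕜] E)
    (hsg : ∀ s t : ℝ, 0 < s → 0 < t → T (s + t) = (T s).comp (T t))
    (hloc : ∃ c > 0, ∃ M : ℝ, ∀ t : ℝ, 0 < t → t ≤ c → ‖T t‖ ≤ M) :
    ((∃ P : E →L[𝕜] E, ∀ x : E, Tendsto (fun t : ℝ => T t x) atTop (𝓝 (P x))) ↔
      (∀ t : ℝ, 0 < t → ∃ Q : E →L[𝕜] E,
        ∀ x : E, Tendsto (fun n : ℕ => T (t * n) x) atTop (𝓝 (Q x)))) ∧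
    (∀ P Q : E →L[𝕜] E, (∀ x : E, Tendsto (fun t : ℝ => T t x) atTop (𝓝 (P x))) →
      (∀ t : ℝ, 0 < t → (∀ x : E, Tendsto (fun n : ℕ => T (t * n) x) atTop (𝓝 (Q x))) →
        P = Q)) := by
  constructor
  · constructor
    · rintro ⟨P, hP⟩ t ht
      exact ⟨P, fun x => (hP x).comp (SGaux.tendsto_mul_nat ht)⟩
    · intro h
      obtain ⟨P, hP⟩ := h 1 one_pos
      have hPn : ∀ x : E, Tendsto (fun n : ℕ => T (n:ℝ) x) atTop (𝓝 (P x)) := by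
        intro x; simpa using hP x
      have hPfix : ∀ x : E, T 1 (P x) = P x := fun x =>
        SGaux.T_fix_limit T hsg one_pos hP x
      obtain ⟨K, hK1, hK⟩ := SGaux.bound T hsg hloc
      refine ⟨P, fun x => ?_⟩
      rw [tendsto_iff_norm_sub_tendsto_zero]
      apply squeeze_zero' (Eventually.of_forall fun r => norm_nonneg _)
        (g := fun r : ℝ => K * ‖T ((⌈r⌉₊ - 1 : ℕ) : ℝ) x - P x‖)
      · filter_upwards [eventually_ge_atTop (2:ℝ)] with r hr
        have hr0 : (0:ℝ) ≤ r := by linarith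
        have hceil2 : 2 ≤ ⌈r⌉₊ := by
          have : 1 < ⌈r⌉₊ := Nat.lt_ceil.mpr (by push_cast; linarith)
          omega
        set n : ℕ := ⌈r⌉₊ - 1 with hn
        have hn1 : 1 ≤ n := by omega
        have hcastn : ((n:ℝ)) = (⌈r⌉₊ : ℝ) - 1 := by
          rw [hn]; push_cast [Nat.cast_sub (by omega : 1 ≤ ⌈r⌉₊)]; ring
        have hceil_lt : (⌈r⌉₊ : ℝ) < r + 1 := Nat.ceil_lt_add_one hr0
        have hle : r ≤ (⌈r⌉₊ : ℝ) := Nat.le_ceil r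
        set sr : ℝ := r - n with hsr
        have hsr0 : 0 < sr := by rw [hsr, hcastn]; linarith
        have hsr1 : sr ≤ 1 := by rw [hsr, hcastn]; linarith
        have hnpos : (0:ℝ) < n := by
          have : (1:ℝ) ≤ (n:ℝ) := by exact_mod_cast hn1
          linarith
        have hTr : T r = (T sr).comp (T (n:ℝ)) := by
          have := hsg sr (n:ℝ) hsr0 hnpos
          have harg : sr + (n:ℝ) = r := by rw [hsr]; ring
          rwa [harg] at this
        have hfixP : T sr (P x) = P x := SGaux.fix T hsg h (hPfix x) hsr0
        have hdiff : T r x - P x = T sr (T (n:ℝ) x - P x) := by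
          rw [map_sub, hfixP]
          have : T r x = T sr (T (n:ℝ) x) := by rw [hTr]; rfl
          rw [this]
        calc ‖T r x - P x‖ = ‖T sr (T (n:ℝ) x - P x)‖ := by rw [hdiff]
          _ ≤ ‖T sr‖ * ‖T (n:ℝ) x - P x‖ := (T sr).le_opNorm _
          _ ≤ K * ‖T (n:ℝ) x - P x‖ :=
              mul_le_mul_of_nonneg_right (hK sr hsr0 hsr1) (norm_nonneg _)
      · have hnat : Tendsto (fun r : ℝ => ⌈r⌉₊ - 1) atTop atTop :=
          (tendsto_sub_atTop_nat 1).comp tendsto_nat_ceil_atTop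
        have h0 : Tendsto (fun n : ℕ => ‖T (n:ℝ) x - P x‖) atTop (𝓝 0) :=
          tendsto_iff_norm_sub_tendsto_zero.mp (hPn x)
        have := (h0.comp hnat).const_mul K
        simpa [Function.comp_def] using this
  · intro P Q hP t ht hQ
    ext x
    exact tendsto_nhds_unique ((hP x).comp (SGaux.tendsto_mul_nat ht)) (hQ x)
end

section
/- Let E be a Banach space and (T_t)_{t ∈ (0,∞)} a semigroup of bounded operators which is locally bounded at 0 and such that for every t > 0 the sequence (T_{tn})_{n ∈ ℕ} converges strongly. Then the semigroup is bounded: sup_{t > 0} ‖T_t‖ < ∞. -/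
open Filter Topology

/-- A semigroup `(T_t)_{t ∈ (0,∞)}` on a Banach space which is locally bounded at `0`
and such that each embedded discrete semigroup `(T_{tn})_{n ∈ ℕ}` converges strongly
is bounded. -/
theorem semigroup_bounded_of_discrete_convergence
    {𝕜 : Type*} [RCLike 𝕜] {E : Type*} [NormedAddCommGroup E] [NormedSpace 𝕜 E]
    [CompleteSpace E]
    (T : ℝ → E →L[𝕜] E)
    (hsg : ∀ s t : ℝ, 0 < s → 0 < t → T (s + t) = (T s).comp (T t))
    (hloc : ∃ c > 0, ∃ M : ℝ, ∀ t : ℝ, 0 < t → t ≤ c → ‖T t‖ ≤ M)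
    (hconv : ∀ t : ℝ, 0 < t → ∃ Q : E →L[𝕜] E,
      ∀ x : E, Tendsto (fun n : ℕ => T (t * n) x) atTop (𝓝 (Q x))) :
    ∃ M : ℝ, ∀ t : ℝ, 0 < t → ‖T t‖ ≤ M := by
  obtain ⟨c, hc, M, hM⟩ := hloc
  have hM0 : 0 ≤ M := le_trans (norm_nonneg _) (hM c hc le_rfl)
  -- uniform bound on T (c * n) via Banach–Steinhaus
  obtain ⟨Q, hQ⟩ := hconv c hc
  obtain ⟨C, hC⟩ : ∃ C, ∀ n : ℕ, ‖T (c * n)‖ ≤ C := by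
    apply banach_steinhaus (g := fun n : ℕ => T (c * n))
    intro x
    obtain ⟨C, hC⟩ : BddAbove (Set.range fun n : ℕ => ‖T (c * n) x‖) :=
      ((hQ x).norm).bddAbove_range
    exact ⟨C, fun n => hC (Set.mem_range_self n)⟩
  refine ⟨max M (C * M), fun t ht => ?_⟩
  rcases le_or_gt t c with h | h
  · exact le_max_of_le_left (hM t ht h)
  · -- write t = c * n + r with n ≥ 1, 0 < r ≤ c
    have htc : (1 : ℝ) < t / c := (one_lt_div hc).mpr h
    have hm2 : 1 < ⌈t / c⌉₊ := Nat.lt_ceil.mpr (by exact_mod_cast htc)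
    set n : ℕ := ⌈t / c⌉₊ - 1 with hn
    have hcast : (n : ℝ) = (⌈t / c⌉₊ : ℝ) - 1 := by
      have : (⌈t / c⌉₊ : ℝ) ≥ 1 := by exact_mod_cast hm2.le
      rw [hn]
      push_cast [Nat.cast_sub hm2.le]
      ring
    have hceil_lt : (⌈t / c⌉₊ : ℝ) < t / c + 1 :=
      Nat.ceil_lt_add_one (le_of_lt (lt_trans one_pos htc))
    have hr_pos : 0 < t - c * n := by
      have : (n : ℝ) < t / c := by rw [hcast]; linarith
      have := (lt_div_iff₀ hc).mp this
      nlinarith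
    have hr_le : t - c * n ≤ c := by
      have h1 : t / c ≤ (⌈t / c⌉₊ : ℝ) := Nat.le_ceil _
      have : t ≤ c * (⌈t / c⌉₊ : ℝ) := by
        rw [mul_comm, ← div_le_iff₀ hc]; exact h1
      nlinarith [hcast]
    have hcn_pos : 0 < c * (n : ℝ) := by
      have hn1 : 1 ≤ n := by omega
      have : (1 : ℝ) ≤ (n : ℝ) := by exact_mod_cast hn1
      nlinarith
    have hsplit : T t = (T (c * n)).comp (T (t - c * n)) := by
      have := hsg (c * n) (t - c * n) hcn_pos hr_pos
      simpa using this
    calc ‖T t‖ ≤ ‖T (c * n)‖ * ‖T (t - c * n)‖ := by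
          rw [hsplit]; exact ContinuousLinearMap.opNorm_comp_le _ _
      _ ≤ C * M := by
          apply mul_le_mul (hC n) (hM _ hr_pos hr_le) (norm_nonneg _)
          exact le_trans (norm_nonneg _) (hC 0)
      _ ≤ max M (C * M) := le_max_right _ _
end

section
/- Let E be a real Banach space, (T_t)_{t∈(0,∞)} a semigroup of bounded operators that is locally bounded at 0, and fix t_0 > 0. If the discrete semigroup (T_{n t_0})_{n∈ℕ} converges strongly to a rank-1 operator P, then (T_t)_{t∈(0,∞)} converges strongly to P as t → ∞. -/
/-!
Put `S = T t₀`. Passing to the limit in `S (T (n t₀) x) = T ((n + 1) t₀) x` gives `S P = P`,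
and `S`-fixed vectors are `P`-fixed, so `P² = P`; for `P = φ ⊗ f₀` this means `φ f₀ = 1` and
`S f₀ = f₀`. Each `T s` commutes with `S`, so `T s f₀` is `S`-fixed, i.e. `T s f₀ = Λ s • f₀`
with `Λ` multiplicative on `(0, ∞)`. As `s ↦ T s f₀` is `t₀`-periodic and `T` is bounded on
`(0, t₀]`, `Λ` is bounded; a bounded real multiplicative function with `Λ t₀ = 1` is `≡ 1`.
Hence `T s P = P` for all `s > 0`, and writing `t = r + n t₀` with `r ∈ (0, t₀]`,
`T t x - P x = T r (T (n t₀) x - P x)` tends to `0`.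
-/

open Filter Topology Set

theorem sub_nat_ceil_pred_mul_mem_Ioc {t₀ t : ℝ} (ht₀ : 0 < t₀) (ht : 0 < t) :
    t - ((⌈t / t₀⌉₊ - 1 : ℕ) : ℝ) * t₀ ∈ Ioc 0 t₀ := by
  have hk : 1 ≤ ⌈t / t₀⌉₊ := Nat.one_le_iff_ne_zero.2 (Nat.ceil_pos.2 (by positivity)).ne'
  have hle : t / t₀ ≤ ⌈t / t₀⌉₊ := Nat.le_ceil _
  have hlt : (⌈t / t₀⌉₊ : ℝ) < t / t₀ + 1 := Nat.ceil_lt_add_one (by positivity)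
  rw [div_le_iff₀ ht₀] at hle
  replace hlt := mul_lt_mul_of_pos_right hlt ht₀
  rw [add_mul, div_mul_cancel₀ _ ht₀.ne', one_mul] at hlt
  rw [Nat.cast_sub hk, Nat.cast_one]
  constructor <;> nlinarith

theorem apply_succ_mul_eq_pow_of_add_eq_mul {Λ : ℝ → ℝ}
    (hmul : ∀ s t, 0 < s → 0 < t → Λ (s + t) = Λ s * Λ t) {s : ℝ} (hs : 0 < s) (n : ℕ) :
    Λ ((n + 1) * s) = Λ s ^ (n + 1) := by
  induction n with
  | zero => simp
  | succ n ih =>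
    rw [Nat.cast_succ, add_one_mul, hmul _ _ (by positivity) hs, ih, ← pow_succ]

theorem eq_one_of_add_eq_mul_of_bddAbove {Λ : ℝ → ℝ}
    (hmul : ∀ s t, 0 < s → 0 < t → Λ (s + t) = Λ s * Λ t) (hbdd : BddAbove (Λ '' Ioi 0))
    {t₀ : ℝ} (ht₀ : 0 < t₀) (h₁ : Λ t₀ = 1) {s : ℝ} (hs : 0 < s) : Λ s = 1 := by
  have hnonneg : ∀ u, 0 < u → 0 ≤ Λ u := fun u hu => by
    rw [← add_halves u, hmul _ _ (half_pos hu) (half_pos hu)]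
    exact mul_self_nonneg _
  have hle : ∀ u, 0 < u → Λ u ≤ 1 := by
    intro u hu
    by_contra! h
    obtain ⟨B, hB⟩ := hbdd
    obtain ⟨n, hn⟩ := pow_unbounded_of_one_lt B h
    have hB' := hB (mem_image_of_mem Λ (mem_Ioi.2 (by positivity : 0 < (n + 1) * u)))
    rw [apply_succ_mul_eq_pow_of_add_eq_mul hmul hu] at hB'
    linarith [pow_le_pow_right₀ h.le (Nat.le_add_right n 1)]
  obtain ⟨n, hn⟩ := exists_nat_gt (s / t₀)
  have hlt : s < (n + 1) * t₀ := by rw [div_lt_iff₀ ht₀] at hn; nlinarith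
  -- `Λ s` and `Λ ((n + 1) * t₀ - s)` lie in `[0, 1]` and multiply to `Λ ((n + 1) * t₀) = 1`.
  have hprod := hmul s ((n + 1) * t₀ - s) hs (sub_pos.2 hlt)
  rw [add_sub_cancel, apply_succ_mul_eq_pow_of_add_eq_mul hmul ht₀, h₁, one_pow] at hprod
  nlinarith [hle s hs, hle _ (sub_pos.2 hlt), hnonneg s hs, hnonneg _ (sub_pos.2 hlt)]

theorem ContinuousLinearMap.apply_eq_one_of_idempotent_of_eq_smul {𝕜 E : Type*}
    [NontriviallyNormedField 𝕜] [NormedAddCommGroup E] [NormedSpace 𝕜 E] {P : E →L[𝕜] E}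
    {φ : E →L[𝕜] 𝕜} {f₀ : E} (hP : ∀ g, P g = φ g • f₀) (hPP : ∀ g, P (P g) = P g)
    (hφ : φ ≠ 0) (hf₀ : f₀ ≠ 0) : φ f₀ = 1 := by
  obtain ⟨g, hg⟩ := DFunLike.ne_iff.1 hφ
  have h := hPP g
  rw [hP g, map_smul, hP f₀, smul_smul] at h
  exact mul_left_cancel₀ hg (smul_left_injective 𝕜 hf₀ (by rwa [mul_one]))

def IsOperatorSemigroup {𝕜 E : Type*} [NontriviallyNormedField 𝕜] [NormedAddCommGroup E]
    [NormedSpace 𝕜 E] (T : ℝ → E →L[𝕜] E) : Prop :=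
  ∀ s t : ℝ, 0 < s → 0 < t → T (s + t) = (T s).comp (T t)

namespace IsOperatorSemigroup

variable {𝕜 E : Type*} [NontriviallyNormedField 𝕜] [NormedAddCommGroup E] [NormedSpace 𝕜 E]
  {T : ℝ → E →L[𝕜] E}

theorem apply_add (hT : IsOperatorSemigroup T) {s t : ℝ} (hs : 0 < s) (ht : 0 < t) (x : E) :
    T (s + t) x = T s (T t x) := by
  rw [hT s t hs ht, ContinuousLinearMap.comp_apply]

theorem apply_comm (hT : IsOperatorSemigroup T) {s t : ℝ} (hs : 0 < s) (ht : 0 < t) (x : E) :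
    T s (T t x) = T t (T s x) := by
  rw [← hT.apply_add hs ht, ← hT.apply_add ht hs, add_comm]

theorem exists_norm_le_on_Ioc (hT : IsOperatorSemigroup T) {c M : ℝ} (hc : 0 < c)
    (hM : ∀ t, 0 < t → t ≤ c → ‖T t‖ ≤ M) (K : ℝ) : ∃ C, ∀ t ∈ Ioc 0 K, ‖T t‖ ≤ C := by
  suffices h : ∀ n : ℕ, ∃ C, ∀ t ∈ Ioc 0 (n * c), ‖T t‖ ≤ C by
    obtain ⟨n, hn⟩ := exists_nat_ge (K / c)
    obtain ⟨C, hC⟩ := h n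
    refine ⟨C, fun t ht => hC t ⟨ht.1, ht.2.trans ?_⟩⟩
    rwa [div_le_iff₀ hc] at hn
  intro n
  induction n with
  | zero => exact ⟨0, fun t ht => absurd ht.2 (by simpa using ht.1)⟩
  | succ n ih =>
    obtain ⟨C, hC⟩ := ih
    refine ⟨max M (M * C), fun t ⟨ht, htn⟩ => ?_⟩
    rcases le_or_gt t c with htc | hct
    · exact (hM t ht htc).trans (le_max_left _ _)
    · have hMc := hM c hc le_rfl
      have hsplit : T t = (T c).comp (T (t - c)) := by
        rw [← hT c (t - c) hc (sub_pos.2 hct), add_sub_cancel]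
      have hCt := hC (t - c) ⟨sub_pos.2 hct, by push_cast at htn; linarith⟩
      calc ‖T t‖ ≤ ‖T c‖ * ‖T (t - c)‖ := hsplit ▸ (T c).opNorm_comp_le _
        _ ≤ M * C := mul_le_mul hMc hCt (norm_nonneg _) ((norm_nonneg _).trans hMc)
        _ ≤ max M (M * C) := le_max_right _ _

theorem apply_add_nat_mul_of_apply_eq (hT : IsOperatorSemigroup T) {t₀ : ℝ} (ht₀ : 0 < t₀)
    {y : E} (hy : T t₀ y = y) {s : ℝ} (hs : 0 < s) (n : ℕ) : T (s + n * t₀) y = T s y := by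
  induction n with
  | zero => simp
  | succ n ih =>
    rw [Nat.cast_succ, add_one_mul, ← add_assoc, hT.apply_add (by positivity) ht₀, hy, ih]

theorem norm_apply_le_of_apply_eq (hT : IsOperatorSemigroup T) {t₀ C : ℝ} (ht₀ : 0 < t₀)
    (hC : ∀ r ∈ Ioc 0 t₀, ‖T r‖ ≤ C) {y : E} (hy : T t₀ y = y) {s : ℝ} (hs : 0 < s) :
    ‖T s y‖ ≤ C * ‖y‖ := by
  have hr := sub_nat_ceil_pred_mul_mem_Ioc ht₀ hs
  have hperiod := hT.apply_add_nat_mul_of_apply_eq ht₀ hy hr.1 (⌈s / t₀⌉₊ - 1)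
  rw [sub_add_cancel] at hperiod
  rw [hperiod]
  exact (T _).le_of_opNorm_le (hC _ hr) y

theorem apply_eq_of_tendsto_nat_mul (hT : IsOperatorSemigroup T) {t₀ : ℝ} (ht₀ : 0 < t₀)
    {x y : E} (hx : Tendsto (fun n : ℕ => T (n * t₀) x) atTop (𝓝 y)) : T t₀ y = y := by
  have hshift : ∀ᶠ n : ℕ in atTop, T t₀ (T (n * t₀) x) = T ((n + 1 : ℕ) * t₀) x := by
    filter_upwards [eventually_ge_atTop 1] with n hn
    rw [← hT.apply_add ht₀ (by positivity), Nat.cast_succ, add_one_mul, add_comm]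
  exact tendsto_nhds_unique (((T t₀).continuous.tendsto y).comp hx)
    (((hx.comp (tendsto_add_atTop_nat 1))).congr' (hshift.mono fun n h => h.symm))

theorem eq_of_tendsto_nat_mul_of_apply_eq (hT : IsOperatorSemigroup T) {t₀ : ℝ}
    (ht₀ : 0 < t₀) {y z : E} (hy : T t₀ y = y)
    (hz : Tendsto (fun n : ℕ => T (n * t₀) y) atTop (𝓝 z)) : z = y := by
  refine tendsto_nhds_unique (hz.comp (tendsto_add_atTop_nat 1)) (tendsto_const_nhds.congr ?_)
  intro n
  simp only [Function.comp_apply, Nat.cast_add_one, add_one_mul, add_comm _ t₀,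
    hT.apply_add_nat_mul_of_apply_eq ht₀ hy ht₀, hy]

theorem eigenvalue_add (hT : IsOperatorSemigroup T) {f₀ : E} (hf₀ : f₀ ≠ 0) {Λ : ℝ → 𝕜}
    (hΛ : ∀ s, 0 < s → T s f₀ = Λ s • f₀) {s t : ℝ} (hs : 0 < s) (ht : 0 < t) :
    Λ (s + t) = Λ s * Λ t := by
  refine smul_left_injective 𝕜 hf₀ ?_
  simp only [← hΛ _ (add_pos hs ht), hT.apply_add hs ht, hΛ t ht, map_smul, hΛ s hs,
    smul_smul, mul_comm (Λ t)]

theorem tendsto_of_tendsto_nat_mul (hT : IsOperatorSemigroup T) {t₀ C : ℝ} (ht₀ : 0 < t₀)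
    (hC : ∀ r ∈ Ioc 0 t₀, ‖T r‖ ≤ C) {x y : E} (hy : ∀ r, 0 < r → T r y = y)
    (hx : Tendsto (fun n : ℕ => T (n * t₀) x) atTop (𝓝 y)) :
    Tendsto (fun t => T t x) atTop (𝓝 y) := by
  set N : ℝ → ℕ := fun t => ⌈t / t₀⌉₊ - 1
  have hN : Tendsto N atTop atTop := (tendsto_sub_atTop_nat 1).comp
    (tendsto_nat_ceil_atTop.comp (tendsto_id.atTop_div_const ht₀))
  have hx' := (tendsto_iff_norm_sub_tendsto_zero.1 hx).comp hN
  rw [tendsto_iff_norm_sub_tendsto_zero]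
  refine squeeze_zero' (Eventually.of_forall fun _ => norm_nonneg _) ?_
    (by simpa using hx'.const_mul C)
  filter_upwards [eventually_gt_atTop t₀] with t ht
  have hr := sub_nat_ceil_pred_mul_mem_Ioc ht₀ (ht₀.trans ht)
  have hNpos : 0 < (N t : ℝ) * t₀ := by
    have : 1 < ⌈t / t₀⌉₊ := Nat.lt_ceil.2 (by rw [Nat.cast_one, one_lt_div ht₀]; exact ht)
    have : (1 : ℝ) ≤ N t := by exact_mod_cast (by omega : 1 ≤ ⌈t / t₀⌉₊ - 1)
    exact mul_pos (by linarith) ht₀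
  calc ‖T t x - y‖ = ‖T (t - N t * t₀) (T (N t * t₀) x - y)‖ := by
        rw [map_sub, hy _ hr.1, ← hT.apply_add hr.1 hNpos, sub_add_cancel]
    _ ≤ C * ‖T (N t * t₀) x - y‖ := (T _).le_of_opNorm_le (hC _ hr) _

end IsOperatorSemigroup

theorem strong_convergence_of_discrete_rank_one_general
    {E : Type*} [NormedAddCommGroup E] [NormedSpace ℝ E]
    (T : ℝ → E →L[ℝ] E)
    (hsg : ∀ s t : ℝ, 0 < s → 0 < t → T (s + t) = (T s).comp (T t))
    (hloc : ∃ c > 0, ∃ M : ℝ, ∀ t : ℝ, 0 < t → t ≤ c → ‖T t‖ ≤ M)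
    (t₀ : ℝ) (ht₀ : 0 < t₀)
    (P : E →L[ℝ] E)
    (hrank : ∃ (φ : E →L[ℝ] ℝ) (f₀ : E), φ ≠ 0 ∧ f₀ ≠ 0 ∧ ∀ g : E, P g = φ g • f₀)
    (hconv : ∀ x : E, Tendsto (fun n : ℕ => T (n * t₀) x) atTop (𝓝 (P x))) :
    ∀ x : E, Tendsto (fun t : ℝ => T t x) atTop (𝓝 (P x)) := by
  obtain ⟨φ, f₀, hφ, hf₀, hP⟩ := hrank
  obtain ⟨c, hc, M, hM⟩ := hloc
  have hT : IsOperatorSemigroup T := hsg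
  have hPfix : ∀ x, T t₀ (P x) = P x := fun x => hT.apply_eq_of_tendsto_nat_mul ht₀ (hconv x)
  have hfixP : ∀ y, T t₀ y = y → P y = y := fun y hy =>
    hT.eq_of_tendsto_nat_mul_of_apply_eq ht₀ hy (hconv y)
  have hφf₀ : φ f₀ = 1 :=
    P.apply_eq_one_of_idempotent_of_eq_smul hP (fun g => hfixP _ (hPfix g)) hφ hf₀
  have hf₀fix : T t₀ f₀ = f₀ := by simpa [hP, hφf₀] using hPfix f₀
  -- `T s f₀` is fixed by `T t₀`, hence by `P`, so it is a multiple of `f₀`.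
  have hΛ : ∀ s, 0 < s → T s f₀ = φ (T s f₀) • f₀ := fun s hs =>
    (hfixP _ (by rw [hT.apply_comm ht₀ hs, hf₀fix])).symm.trans (hP _)
  obtain ⟨C, hC⟩ := hT.exists_norm_le_on_Ioc hc hM t₀
  have hbdd : BddAbove ((fun s => φ (T s f₀)) '' Ioi 0) := by
    refine ⟨‖φ‖ * (C * ‖f₀‖), ?_⟩
    rintro _ ⟨s, hs, rfl⟩
    exact (le_abs_self _).trans ((φ.le_opNorm _).trans
      (mul_le_mul_of_nonneg_left (hT.norm_apply_le_of_apply_eq ht₀ hC hf₀fix hs) (norm_nonneg _)))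
  have hΛ₁ : ∀ s, 0 < s → φ (T s f₀) = 1 := fun s hs =>
    eq_one_of_add_eq_mul_of_bddAbove (fun _ _ => hT.eigenvalue_add hf₀ hΛ) hbdd ht₀
      (by rw [hf₀fix, hφf₀]) hs
  intro x
  refine hT.tendsto_of_tendsto_nat_mul ht₀ hC (fun r hr => ?_) (hconv x)
  rw [hP, map_smul, hΛ r hr, hΛ₁ r hr, one_smul]

/-- If a semigroup `(T_t)_{t ∈ (0,∞)}` on a real Banach space is locally bounded at `0`
and for some `t₀ > 0` the discrete semigroup `(T_{n t₀})_{n ∈ ℕ}` converges strongly to a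
rank-one operator `P`, then the whole semigroup converges strongly to `P` as `t → ∞`. -/
theorem strong_convergence_of_discrete_rank_one
    {E : Type*} [NormedAddCommGroup E] [NormedSpace ℝ E] [CompleteSpace E]
    (T : ℝ → E →L[ℝ] E)
    (hsg : ∀ s t : ℝ, 0 < s → 0 < t → T (s + t) = (T s).comp (T t))
    (hloc : ∃ c > 0, ∃ M : ℝ, ∀ t : ℝ, 0 < t → t ≤ c → ‖T t‖ ≤ M)
    (t₀ : ℝ) (ht₀ : 0 < t₀)
    (P : E →L[ℝ] E)
    (hrank : ∃ (φ : E →L[ℝ] ℝ) (f₀ : E), φ ≠ 0 ∧ f₀ ≠ 0 ∧ ∀ g : E, P g = φ g • f₀)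
    (hconv : ∀ x : E, Tendsto (fun n : ℕ => T (n * t₀) x) atTop (𝓝 (P x))) :
    ∀ x : E, Tendsto (fun t : ℝ => T t x) atTop (𝓝 (P x)) :=
  strong_convergence_of_discrete_rank_one_general T hsg hloc t₀ ht₀ P hrank hconv
end

section
/- Let E be a Banach lattice and T ∈ L(E) a positive operator such that for some m₀ ∈ ℕ the sequence (T^{n m₀})_{n∈ℕ} converges strongly to a rank-1 operator P. Then (T^n)_{n∈ℕ} converges strongly to P. -/
/-!
Limits of operators commuting with `T` commute with `T`, so `T` leaves the line `range P`
invariant and acts on it by a scalar `c`. Since `T^{m₀}` fixes `range P`, `c ^ m₀ = 1`, and a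
nonzero positive vector of `range P` (it exists because `P` is positive and nonzero) rules out
`c = -1` for the positive operator `T`. Hence every power of `T` fixes `range P`, and writing
`T^n = T^{n % m₀} T^{(n / m₀) m₀}`, the finitely many operators `T^r`, `r < m₀`, are uniformly
bounded.
-/

open Filter Topology

theorem exists_nonneg_apply_ne_zero {E G F : Type*} [Lattice E] [AddGroup E] [AddLeftMono E]
    [AddGroup G] [FunLike F E G] [AddMonoidHomClass F E G] {φ : F} (h : ∃ g, φ g ≠ 0) :
    ∃ g, 0 ≤ g ∧ φ g ≠ 0 := by
  obtain ⟨g, hg⟩ := h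
  by_contra! H
  rw [← posPart_sub_negPart g, map_sub, H _ (posPart_nonneg g), H _ (negPart_nonneg g),
    sub_zero] at hg
  exact hg rfl

theorem eq_one_of_pow_eq_one_of_smul_nonneg {K E : Type*} [Ring K] [LinearOrder K]
    [IsStrictOrderedRing K] [AddCommGroup E] [PartialOrder E] [IsOrderedAddMonoid E] [Module K E]
    {c : K} {m : ℕ} {w : E} (hm : m ≠ 0) (hcm : c ^ m = 1) (hw : 0 ≤ w) (hw0 : w ≠ 0)
    (hcw : 0 ≤ c • w) : c = 1 := by
  rcases (pow_eq_one_iff_of_ne_zero hm).mp hcm with hc | ⟨rfl, -⟩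
  · exact hc
  · rw [neg_one_smul, neg_nonneg] at hcw
    exact absurd (le_antisymm hcw hw) hw0

theorem LinearMap.exists_forall_apply_eq_smul_of_commute_of_rank_one {K E : Type*} [Field K]
    [AddCommGroup E] [Module K E] {T : E →ₗ[K] E} {P : E → E} {φ : E → K} {f : E}
    (hP : ∀ x, P x = φ x • f) (hTP : ∀ x, T (P x) = P (T x)) :
    ∃ c : K, ∀ x, T (P x) = c • P x := by
  by_cases hφ : ∀ g, φ g = 0
  · exact ⟨0, fun x => by simp [hP, hφ]⟩
  push Not at hφ
  obtain ⟨g, hg⟩ := hφ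
  have hTf : T f = (φ (T g) / φ g) • f := by
    have hTPg := hTP g
    rw [hP, hP, map_smul] at hTPg
    rw [div_eq_inv_mul, mul_smul, ← hTPg, inv_smul_smul₀ hg]
  exact ⟨φ (T g) / φ g, fun x => by rw [hP, map_smul, hTf, smul_comm]⟩

namespace ContinuousLinearMap

theorem pow_apply_eq_pow_smul {R E : Type*} [CommSemiring R] [TopologicalSpace E]
    [AddCommMonoid E] [Module R E] {T : E →L[R] E} {c : R} {v : E} (h : T v = c • v) (n : ℕ) :
    (T ^ n) v = c ^ n • v := by
  induction n with
  | zero => simp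
  | succ n ih => rw [pow_succ, mul_apply_eq_comp, h, map_smul, ih, smul_smul, pow_succ']

theorem apply_apply_eq_of_tendsto_of_commute {R E ι : Type*} [Semiring R] [TopologicalSpace E]
    [T2Space E] [AddCommMonoid E] [Module R E] {l : Filter ι} [l.NeBot] {T P : E →L[R] E}
    {S : ι → E →L[R] E} (hS : ∀ i, Commute T (S i))
    (h : ∀ x, Tendsto (fun i => S i x) l (𝓝 (P x))) (x : E) : T (P x) = P (T x) := by
  refine tendsto_nhds_unique ((T.continuous.tendsto _).comp (h x)) ?_
  simpa only [Function.comp_def, ← mul_apply_eq_comp, (hS _).eq] using h (T x)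

theorem pow_apply_eq_of_tendsto_pow_mul_apply {R E : Type*} [Semiring R] [TopologicalSpace E]
    [T2Space E] [AddCommMonoid E] [Module R E] {T : E →L[R] E} {m : ℕ} {x y : E}
    (h : Tendsto (fun n : ℕ => (T ^ (n * m)) x) atTop (𝓝 y)) : (T ^ m) y = y := by
  refine isFixedPt_of_tendsto_iterate (x := x) ?_ (T ^ m).continuous.continuousAt
  simpa only [← FunLike.coe_pow_eq_iterate, ← pow_mul'] using h

theorem tendsto_pow_apply_of_tendsto_pow_mul_apply {𝕜 E : Type*} [NontriviallyNormedField 𝕜]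
    [SeminormedAddCommGroup E] [NormedSpace 𝕜 E] {T : E →L[𝕜] E} {m : ℕ} (hm : 0 < m) {x y : E}
    (h : Tendsto (fun n : ℕ => (T ^ (n * m)) x) atTop (𝓝 y)) (hy : ∀ r < m, (T ^ r) y = y) :
    Tendsto (fun n : ℕ => (T ^ n) x) atTop (𝓝 y) := by
  set C := ∑ r ∈ Finset.range m, ‖T ^ r‖
  have hdecomp : ∀ n, (T ^ n) x - y = (T ^ (n % m)) ((T ^ (n / m * m)) x - y) := fun n => by
    rw [map_sub, hy _ (Nat.mod_lt n hm), ← mul_apply_eq_comp, ← pow_add, Nat.mod_add_div']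
  have hbound : ∀ n, ‖(T ^ n) x - y‖ ≤ C * ‖(T ^ (n / m * m)) x - y‖ := fun n => by
    rw [hdecomp]
    refine ((T ^ (n % m)).le_opNorm _).trans (mul_le_mul_of_nonneg_right ?_ (norm_nonneg _))
    exact Finset.single_le_sum (fun r _ => norm_nonneg (T ^ r))
      (Finset.mem_range.mpr (Nat.mod_lt n hm))
  rw [tendsto_iff_norm_sub_tendsto_zero] at h ⊢
  refine squeeze_zero (fun n => norm_nonneg _) hbound ?_
  simpa using (h.comp (Nat.tendsto_div_const_atTop hm.ne')).const_mul C

end ContinuousLinearMap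

theorem powers_converge_of_subpowers_converge_rank_one_general
    {E : Type*} [NormedAddCommGroup E] [Lattice E] [HasSolidNorm E]
    [IsOrderedAddMonoid E] [NormedSpace ℝ E]
    (T : E →L[ℝ] E) (hpos : ∀ f : E, 0 ≤ f → 0 ≤ T f)
    (m₀ : ℕ) (hm₀ : 1 ≤ m₀)
    (P : E →L[ℝ] E)
    (hrank : ∃ (φ : E →L[ℝ] ℝ) (f₀ : E), φ ≠ 0 ∧ f₀ ≠ 0 ∧ ∀ g : E, P g = φ g • f₀)
    (hconv : ∀ x : E, Tendsto (fun n : ℕ => (T ^ (n * m₀)) x) atTop (𝓝 (P x))) :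
    ∀ x : E, Tendsto (fun n : ℕ => (T ^ n) x) atTop (𝓝 (P x)) := by
  obtain ⟨φ, f₀, hφ, hf₀, hP⟩ := hrank
  have hTP : ∀ x, T (P x) = P (T x) :=
    T.apply_apply_eq_of_tendsto_of_commute (fun n => (Commute.refl T).pow_right _) hconv
  obtain ⟨c, hc⟩ :=
    LinearMap.exists_forall_apply_eq_smul_of_commute_of_rank_one (T := (T : E →ₗ[ℝ] E)) hP hTP
  obtain ⟨g, hg, hφg⟩ := exists_nonneg_apply_ne_zero (DFunLike.ne_iff.mp hφ)
  have hPg : 0 ≤ P g := ge_of_tendsto' (hconv g) fun n => by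
    rw [FunLike.coe_pow_eq_iterate]
    exact Set.MapsTo.iterate (f := T) hpos _ hg
  have hPg0 : P g ≠ 0 := by
    rw [hP]
    exact smul_ne_zero hφg hf₀
  have hcm : c ^ m₀ = 1 := smul_left_injective ℝ hPg0 <| show c ^ m₀ • P g = (1 : ℝ) • P g by
    rw [← T.pow_apply_eq_pow_smul (hc g), T.pow_apply_eq_of_tendsto_pow_mul_apply (hconv g),
      one_smul]
  have hc1 : c = 1 :=
    eq_one_of_pow_eq_one_of_smul_nonneg (by omega) hcm hPg hPg0 (hc g ▸ hpos _ hPg)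
  intro x
  refine T.tendsto_pow_apply_of_tendsto_pow_mul_apply hm₀ (hconv x) fun r _ => ?_
  rw [T.pow_apply_eq_pow_smul (hc x), hc1, one_pow, one_smul]

/-- If `T` is a positive operator on a Banach lattice and for some `m₀ ∈ ℕ` the powers
`(T^{n m₀})_{n ∈ ℕ}` converge strongly to a rank-one operator `P`, then `(T^n)_{n ∈ ℕ}`
converges strongly to `P`. -/
theorem powers_converge_of_subpowers_converge_rank_one
    {E : Type*} [NormedAddCommGroup E] [Lattice E] [HasSolidNorm E]
    [IsOrderedAddMonoid E] [NormedSpace ℝ E] [CompleteSpace E]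
    (T : E →L[ℝ] E) (hpos : ∀ f : E, 0 ≤ f → 0 ≤ T f)
    (m₀ : ℕ) (hm₀ : 1 ≤ m₀)
    (P : E →L[ℝ] E)
    (hrank : ∃ (φ : E →L[ℝ] ℝ) (f₀ : E), φ ≠ 0 ∧ f₀ ≠ 0 ∧ ∀ g : E, P g = φ g • f₀)
    (hconv : ∀ x : E, Tendsto (fun n : ℕ => (T ^ (n * m₀)) x) atTop (𝓝 (P x))) :
    ∀ x : E, Tendsto (fun n : ℕ => (T ^ n) x) atTop (𝓝 (P x)) :=
  powers_converge_of_subpowers_converge_rank_one_general T hpos m₀ hm₀ P hrank hconv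
end

section
/- Let E be a Banach space, T ∈ L(E) power-bounded with (T^n) converging strongly to an operator P. Let U be a free ultrafilter on ℕ and suppose the lifted operators (T^U)^n on the ultrapower E^U converge strongly to P^U. Then (T^n) converges to P in operator norm. -/
/-!
Strong convergence forces `T ^ m * P = P`, hence `T ^ n - P = T ^ (n - N) * (T ^ N - P)` for
`N ≤ n`, so by power-boundedness it suffices to make `‖T ^ N - P‖` small for a single `N`.
If that fails for some `ε`, pick `x N` in the unit ball with `ε < ‖(T ^ N - P) (x N)‖`. The
ultrapower hypothesis applied to the bounded sequence `x` gives one power `N₀` with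
`‖(T ^ N₀ - P) (x k)‖` small for `U`-many `k`; since `U` is free one such `k` is `≥ N₀`, and
then `‖(T ^ k - P) (x k)‖ ≤ M ‖(T ^ N₀ - P) (x k)‖` is small too, a contradiction.
-/

open Filter Topology

lemma ContinuousLinearMap.pow_mul_eq_of_tendsto_pow_apply {R E : Type*} [Semiring R]
    [TopologicalSpace E] [AddCommMonoid E] [Module R E] [T2Space E] {T P : E →L[R] E}
    (hstrong : ∀ x, Tendsto (fun n : ℕ => (T ^ n) x) atTop (𝓝 (P x))) (m : ℕ) :
    T ^ m * P = P := by
  ext x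
  have hshift : Tendsto (fun n : ℕ => (T ^ m) ((T ^ n) x)) atTop (𝓝 (P x)) := by
    simpa only [Function.comp_def, add_comm _ m, pow_add, mul_apply_eq_comp]
      using (hstrong x).comp (tendsto_add_atTop_nat m)
  exact tendsto_nhds_unique (((T ^ m).continuous.tendsto _).comp (hstrong x)) hshift

lemma pow_sub_eq_pow_mul_pow_sub {A : Type*} [Ring A] {a b : A} {N n : ℕ} (hNn : N ≤ n)
    (hab : a ^ (n - N) * b = b) : a ^ n - b = a ^ (n - N) * (a ^ N - b) := by
  rw [mul_sub, hab, ← pow_add, Nat.sub_add_cancel hNn]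

section PowerBounded

variable {A : Type*} [NormedRing A] {a b : A} {M : ℝ}

lemma norm_pow_sub_le_mul (hM : ∀ n, ‖a ^ n‖ ≤ M) (hab : ∀ m, a ^ m * b = b) {N n : ℕ}
    (hNn : N ≤ n) : ‖a ^ n - b‖ ≤ M * ‖a ^ N - b‖ := by
  rw [pow_sub_eq_pow_mul_pow_sub hNn (hab _)]
  exact (norm_mul_le _ _).trans (mul_le_mul_of_nonneg_right (hM _) (norm_nonneg _))

lemma tendsto_norm_pow_sub_of_forall_exists_norm_pow_sub_le (hM : ∀ n, ‖a ^ n‖ ≤ M)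
    (hab : ∀ m, a ^ m * b = b) (hsmall : ∀ ε > 0, ∃ N, ‖a ^ N - b‖ ≤ ε) :
    Tendsto (fun n : ℕ => ‖a ^ n - b‖) atTop (𝓝 0) := by
  have hM0 : 0 ≤ M := (norm_nonneg _).trans (hM 0)
  refine Metric.tendsto_atTop.2 fun ε hε => ?_
  obtain ⟨N, hN⟩ := hsmall (ε / (M + 1)) (by positivity)
  refine ⟨N, fun n hNn => ?_⟩
  rw [Real.dist_eq, sub_zero, abs_norm]
  calc ‖a ^ n - b‖ ≤ M * (ε / (M + 1)) :=
        (norm_pow_sub_le_mul hM hab hNn).trans (mul_le_mul_of_nonneg_left hN hM0)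
    _ < ε := by
        rw [mul_div_assoc', div_lt_iff₀ (by positivity)]
        linarith

end PowerBounded

section Ultrapower

variable {𝕜 E : Type*} [DenselyNormedField 𝕜] [NormedAddCommGroup E] [NormedSpace 𝕜 E]
  {T P : E →L[𝕜] E} {M : ℝ}

lemma ContinuousLinearMap.norm_pow_apply_sub_le_mul (hM : ∀ n, ‖T ^ n‖ ≤ M)
    (hTP : ∀ m, T ^ m * P = P) {N n : ℕ} (hNn : N ≤ n) (x : E) :
    ‖(T ^ n) x - P x‖ ≤ M * ‖(T ^ N) x - P x‖ := by
  rw [← sub_apply, pow_sub_eq_pow_mul_pow_sub hNn (hTP _), mul_apply_eq_comp, ← sub_apply]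
  exact ((T ^ (n - N)).le_opNorm _).trans (mul_le_mul_of_nonneg_right (hM _) (norm_nonneg _))

lemma ContinuousLinearMap.exists_norm_pow_sub_le_of_ultrapower (hM : ∀ n, ‖T ^ n‖ ≤ M)
    (hTP : ∀ m, T ^ m * P = P) {U : Ultrafilter ℕ} (hU : (U : Filter ℕ) ≤ cofinite)
    (hultra : ∀ f : ℕ → E, (∃ C : ℝ, ∀ k, ‖f k‖ ≤ C) →
      ∀ ε > (0 : ℝ), ∃ N : ℕ, {k : ℕ | ‖(T ^ N) (f k) - P (f k)‖ ≤ ε} ∈ U)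
    {ε : ℝ} (hε : 0 < ε) : ∃ N, ‖T ^ N - P‖ ≤ ε := by
  by_contra! hlarge
  choose x hx_norm hx_large using fun N => (T ^ N - P).exists_lt_apply_of_lt_opNorm (hlarge N)
  have hM0 : 0 ≤ M := (norm_nonneg _).trans (hM 0)
  obtain ⟨N, hN⟩ := hultra x ⟨1, fun k => (hx_norm k).le⟩ (ε / (M + 1)) (by positivity)
  -- Freeness of `U` lets us test the `N`-th power on some `x k` with `k ≥ N`.
  have hfreq : ∃ᶠ k in atTop, ‖(T ^ N) (x k) - P (x k)‖ ≤ ε / (M + 1) :=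
    Eventually.frequently (f := (U : Filter ℕ)) hN |>.filter_mono
      (hU.trans Nat.cofinite_eq_atTop.le)
  obtain ⟨k, hNk, hk⟩ := frequently_atTop.1 hfreq N
  have hbound : ‖(T ^ k) (x k) - P (x k)‖ < ε :=
    calc ‖(T ^ k) (x k) - P (x k)‖ ≤ M * (ε / (M + 1)) :=
          (norm_pow_apply_sub_le_mul hM hTP hNk _).trans (mul_le_mul_of_nonneg_left hk hM0)
      _ < ε := by
          rw [mul_div_assoc', div_lt_iff₀ (by positivity)]
          linarith
  exact (hx_large k).not_ge (by simpa only [sub_apply] using hbound.le)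

end Ultrapower

theorem norm_convergence_of_ultrapower_strong_convergence_general
    {𝕜 : Type*} [RCLike 𝕜] {E : Type*} [NormedAddCommGroup E] [NormedSpace 𝕜 E]
    (T : E →L[𝕜] E) (hpb : ∃ M : ℝ, ∀ n : ℕ, ‖T ^ n‖ ≤ M)
    (P : E →L[𝕜] E)
    (hstrong : ∀ x : E, Tendsto (fun n : ℕ => (T ^ n) x) atTop (𝓝 (P x)))
    (U : Ultrafilter ℕ) (hU : (U : Filter ℕ) ≤ cofinite)
    (hultra : ∀ f : ℕ → E, (∃ C : ℝ, ∀ k, ‖f k‖ ≤ C) →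
      ∀ ε > (0 : ℝ), ∃ N : ℕ, ∀ n ≥ N,
        {k : ℕ | ‖(T ^ n) (f k) - P (f k)‖ ≤ ε} ∈ U) :
    Tendsto (fun n : ℕ => ‖(T ^ n : E →L[𝕜] E) - P‖) atTop (𝓝 0) := by
  obtain ⟨M, hM⟩ := hpb
  have hTP := ContinuousLinearMap.pow_mul_eq_of_tendsto_pow_apply hstrong
  exact tendsto_norm_pow_sub_of_forall_exists_norm_pow_sub_le hM hTP fun ε hε =>
    ContinuousLinearMap.exists_norm_pow_sub_le_of_ultrapower hM hTP hU
      (fun f hf δ hδ => (hultra f hf δ hδ).imp fun N hN => hN N le_rfl) hε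

/-- Let `T` be a power-bounded operator on a Banach space whose powers converge strongly
to `P`, let `U` be a free ultrafilter on `ℕ`, and suppose the lifted powers `(T^𝒰)^n`
converge strongly to `P^𝒰` on the ultrapower `E^𝒰` (expressed via representatives: for
every bounded sequence `f` in `E`, the ultrafilter limits of `‖T^n (f k) - P (f k)‖` tend
to `0` as `n → ∞`).  Then `(T^n)` converges to `P` in operator norm. -/
theorem norm_convergence_of_ultrapower_strong_convergence
    {𝕜 : Type*} [RCLike 𝕜] {E : Type*} [NormedAddCommGroup E] [NormedSpace 𝕜 E]
    [CompleteSpace E]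
    (T : E →L[𝕜] E) (hpb : ∃ M : ℝ, ∀ n : ℕ, ‖T ^ n‖ ≤ M)
    (P : E →L[𝕜] E)
    (hstrong : ∀ x : E, Tendsto (fun n : ℕ => (T ^ n) x) atTop (𝓝 (P x)))
    (U : Ultrafilter ℕ) (hU : (U : Filter ℕ) ≤ cofinite)
    (hultra : ∀ f : ℕ → E, (∃ C : ℝ, ∀ k, ‖f k‖ ≤ C) →
      ∀ ε > (0 : ℝ), ∃ N : ℕ, ∀ n ≥ N,
        {k : ℕ | ‖(T ^ n) (f k) - P (f k)‖ ≤ ε} ∈ U) :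
    Tendsto (fun n : ℕ => ‖(T ^ n : E →L[𝕜] E) - P‖) atTop (𝓝 0) :=
  norm_convergence_of_ultrapower_strong_convergence_general T hpb P hstrong U hU hultra
end

section
/- Let T be a power-bounded operator on a complex Banach space E, let U be a free ultrafilter on ℕ, and suppose ((T^U)^n)_{n∈ℕ} converges strongly to 0 on the ultrapower E^U. Then the spectral radius of T is strictly less than 1, and consequently ‖T^n‖ → 0. -/
/-! If `spectralRadius ℂ T ≥ 1`, pick `z` in the spectrum with `‖z‖` equal to the spectral radius.
Such a `z` lies on the boundary of the spectrum, so it is an approximate eigenvalue: there are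
unit vectors `x k` with `T (x k) - z • x k → 0`, hence `‖T ^ n (x k)‖ → ‖z‖ ^ n ≥ 1` for every `n`.
Since `U` is free, this contradicts the strong convergence `(T^U)^n → 0` on the class of the
bounded sequence `x`. Once the spectral radius is `< 1`, Gelfand's formula gives `‖T ^ n‖ ≤ r ^ n`
eventually, for some `r < 1`. -/

open Filter Topology

open scoped NNReal ENNReal

theorem tendsto_norm_pow_of_spectralRadius_lt_one {A : Type*} [NormedRing A]
    [NormedAlgebra ℂ A] [CompleteSpace A] {a : A} (ha : spectralRadius ℂ a < 1) :
    Tendsto (fun n : ℕ => ‖a ^ n‖) atTop (𝓝 0) := by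
  obtain ⟨r, har, hr1⟩ := exists_between ha
  lift r to ℝ≥0 using ne_top_of_lt hr1
  have hgelfand := spectrum.pow_nnnorm_pow_one_div_tendsto_nhds_spectralRadius a
  have hpow : ∀ᶠ n : ℕ in atTop, ‖a ^ n‖ ≤ (r : ℝ) ^ n := by
    filter_upwards [hgelfand.eventually_lt_const har, eventually_ne_atTop 0] with n hn hn0
    have hn_pos : (0 : ℝ) < n := by positivity
    have := ENNReal.rpow_lt_rpow hn hn_pos
    rw [← ENNReal.rpow_mul, one_div, inv_mul_cancel₀ hn_pos.ne', ENNReal.rpow_one,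
      ENNReal.rpow_natCast, ← ENNReal.coe_pow, ENNReal.coe_lt_coe] at this
    exact_mod_cast this.le
  exact squeeze_zero' (.of_forall fun n => norm_nonneg _) hpow
    (tendsto_pow_atTop_nhds_zero_of_lt_one r.coe_nonneg (mod_cast ENNReal.coe_lt_one_iff.mp hr1))

section RCLike

variable {𝕜 : Type*} [RCLike 𝕜]

theorem spectrum.mem_frontier_of_spectralRadius_le {A : Type*} [NormedRing A]
    [NormedAlgebra 𝕜 A] [CompleteSpace A] {a : A} {z : 𝕜} (hz : z ∈ spectrum 𝕜 a)
    (hr : spectralRadius 𝕜 a ≤ ‖z‖₊) : z ∈ frontier (spectrum 𝕜 a) := by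
  have hball : spectrum 𝕜 a ⊆ Metric.closedBall 0 ‖z‖ := fun k hk => mem_closedBall_zero_iff.mpr
    (mod_cast ENNReal.coe_le_coe.mp ((le_iSup₂ (α := ℝ≥0∞) k hk).trans hr))
  have hsphere : z ∈ frontier (Metric.closedBall (0 : 𝕜) ‖z‖) := by
    rw [frontier_closedBall']
    simp
  rw [(spectrum.isClosed a).frontier_eq]
  exact ⟨hz, fun hint => hsphere.2 (interior_mono hball hint)⟩

theorem spectrum.inv_norm_inv_le_norm_sub {A : Type*} [NormedRing A] [NormedAlgebra 𝕜 A]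
    [NormOneClass A] [CompleteSpace A] {a : A} {z μ : 𝕜} (hz : z ∈ spectrum 𝕜 a) (u : Aˣ)
    (hu : (u : A) = algebraMap 𝕜 A μ - a) : ‖(↑u⁻¹ : A)‖⁻¹ ≤ ‖μ - z‖ := by
  by_contra! hlt
  have hnear : ‖(algebraMap 𝕜 A z - a) - u‖ < ‖(↑u⁻¹ : A)‖⁻¹ := by
    rwa [hu, sub_sub_sub_cancel_right, ← map_sub, norm_algebraMap', norm_sub_rev]
  exact spectrum.mem_iff.mp hz (u.ofNearby _ hnear).isUnit

variable {E : Type*} [NormedAddCommGroup E] [NormedSpace 𝕜 E]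

theorem ContinuousLinearMap.exists_norm_eq_one_norm_apply_lt [Nontrivial E]
    (S : (E →L[𝕜] E)ˣ) {c : ℝ} (hc : ‖(↑S⁻¹ : E →L[𝕜] E)‖⁻¹ < c) :
    ∃ x : E, ‖x‖ = 1 ∧ ‖(S : E →L[𝕜] E) x‖ < c := by
  have hc_pos : 0 < c := (inv_pos.mpr (Units.norm_pos S⁻¹)).trans hc
  obtain ⟨y, hy, hSy⟩ := (↑S⁻¹ : E →L[𝕜] E).exists_lt_apply_of_lt_opNorm
    (inv_lt_of_inv_lt₀ (Units.norm_pos S⁻¹) hc)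
  set v := (↑S⁻¹ : E →L[𝕜] E) y
  have hv : 0 < ‖v‖ := (inv_pos.mpr hc_pos).trans hSy
  have hSv : (S : E →L[𝕜] E) v = y := by
    rw [← mul_apply_eq_comp, Units.mul_inv, one_apply_eq_self]
  refine ⟨(‖v‖⁻¹ : 𝕜) • v, ?_, ?_⟩
  · rw [norm_smul, norm_inv, RCLike.norm_ofReal, abs_norm, inv_mul_cancel₀ hv.ne']
  · rw [map_smul, hSv, norm_smul, norm_inv, RCLike.norm_ofReal, abs_norm, inv_mul_lt_iff₀ hv]
    calc ‖y‖ < 1 := hy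
      _ = c⁻¹ * c := (inv_mul_cancel₀ hc_pos.ne').symm
      _ < ‖v‖ * c := mul_lt_mul_of_pos_right hSy hc_pos

variable [CompleteSpace E]

theorem exists_approx_eigenvector_of_mem_frontier_spectrum {T : E →L[𝕜] E} {z : 𝕜}
    (hz : z ∈ frontier (spectrum 𝕜 T)) {ε : ℝ} (hε : 0 < ε) :
    ∃ x : E, ‖x‖ = 1 ∧ ‖T x - z • x‖ < ε := by
  have hz_spec : z ∈ spectrum 𝕜 T := (spectrum.isClosed T).frontier_subset hz
  have : Nontrivial E := by
    by_contra! h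
    simp [spectrum.of_subsingleton] at hz_spec
  have hz_res : z ∈ closure (resolventSet 𝕜 T) :=
    frontier_subset_closure (by rw [← frontier_compl]; exact hz)
  obtain ⟨μ, hμ, hμz⟩ := Metric.mem_closure_iff.mp hz_res (ε / 2) (half_pos hε)
  have hdist : ‖μ - z‖ < ε / 2 := by rwa [← dist_eq_norm, dist_comm]
  obtain ⟨x, hx1, hx⟩ := ContinuousLinearMap.exists_norm_eq_one_norm_apply_lt hμ.unit
    ((spectrum.inv_norm_inv_le_norm_sub hz_spec hμ.unit hμ.unit_spec).trans_lt hdist)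
  have hsplit : T x - z • x = (μ - z) • x - (hμ.unit : E →L[𝕜] E) x := by
    rw [hμ.unit_spec, Algebra.algebraMap_eq_smul_one]
    simp only [sub_apply, smul_apply, one_apply_eq_self]
    module
  refine ⟨x, hx1, ?_⟩
  calc ‖T x - z • x‖ ≤ ‖μ - z‖ * ‖x‖ + ‖(hμ.unit : E →L[𝕜] E) x‖ := by
        rw [hsplit, ← norm_smul]; exact norm_sub_le _ _
    _ < ε / 2 + ε / 2 := by rw [hx1, mul_one]; exact add_lt_add hdist hx
    _ = ε := add_halves ε

end RCLike

theorem tendsto_pow_apply_sub_pow_smul {𝕜 E ι : Type*} [NormedField 𝕜] [NormedAddCommGroup E]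
    [NormedSpace 𝕜 E] {l : Filter ι} {T : E →L[𝕜] E} {z : 𝕜} {x : ι → E}
    (hx : Tendsto (fun k => T (x k) - z • x k) l (𝓝 0)) (n : ℕ) :
    Tendsto (fun k => (T ^ n) (x k) - z ^ n • x k) l (𝓝 0) := by
  induction n with
  | zero => simpa using tendsto_const_nhds
  | succ n ih =>
    have hsplit : ∀ k, (T ^ (n + 1)) (x k) - z ^ (n + 1) • x k
        = (T ^ n) (T (x k) - z • x k) + z • ((T ^ n) (x k) - z ^ n • x k) := fun k => by
      rw [map_sub, map_smul, pow_succ, mul_apply_eq_comp, pow_succ]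
      module
    simp only [hsplit]
    simpa using ((T ^ n).continuous.tendsto' 0 0 (map_zero _) |>.comp hx).add (ih.const_smul z)

section Ultrapower

variable {E : Type*} [NormedAddCommGroup E] [NormedSpace ℂ E] [CompleteSpace E]

theorem norm_lt_one_of_mem_frontier_spectrum_of_ultrapower {T : E →L[ℂ] E}
    {U : Ultrafilter ℕ} (hU : (U : Filter ℕ) ≤ cofinite)
    (hultra : ∀ f : ℕ → E, (∃ C : ℝ, ∀ k, ‖f k‖ ≤ C) →
      ∀ ε > (0 : ℝ), ∃ N : ℕ, ∀ n ≥ N, {k : ℕ | ‖(T ^ n) (f k)‖ ≤ ε} ∈ U)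
    {z : ℂ} (hz : z ∈ frontier (spectrum ℂ T)) : ‖z‖ < 1 := by
  by_contra! hz1
  choose x hx1 hx using fun k : ℕ => exists_approx_eigenvector_of_mem_frontier_spectrum hz
    (Nat.one_div_pos_of_nat (n := k))
  have happrox : Tendsto (fun k => T (x k) - z • x k) atTop (𝓝 0) :=
    tendsto_zero_iff_norm_tendsto_zero.mpr <| squeeze_zero (fun _ => norm_nonneg _)
      (fun k => (hx k).le) tendsto_one_div_add_atTop_nhds_zero_nat
  obtain ⟨N, hN⟩ := hultra x ⟨1, fun k => (hx1 k).le⟩ (1 / 2) one_half_pos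
  have hlarge : ∀ᶠ k in atTop, 1 / 2 < ‖(T ^ N) (x k)‖ := by
    filter_upwards [(tendsto_zero_iff_norm_tendsto_zero.mp
      (tendsto_pow_apply_sub_pow_smul happrox N)).eventually_lt_const one_half_pos] with k hk
    have hzN : ‖z ^ N • x k‖ = ‖z‖ ^ N := by rw [norm_smul, norm_pow, hx1 k, mul_one]
    linarith [norm_sub_norm_le (z ^ N • x k) ((T ^ N) (x k)),
      norm_sub_rev (z ^ N • x k) ((T ^ N) (x k)), one_le_pow₀ (n := N) hz1]
  obtain ⟨k, hk_small, hk_large⟩ :=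
    (Filter.Eventually.and (f := (U : Filter ℕ)) (hN N le_rfl)
      (hU.trans Nat.cofinite_eq_atTop.le hlarge)).exists
  exact (lt_of_lt_of_le hk_large hk_small).false

end Ultrapower

theorem spectralRadius_lt_one_of_ultrapower_strong_convergence_general
    {E : Type*} [NormedAddCommGroup E] [NormedSpace ℂ E] [CompleteSpace E]
    (T : E →L[ℂ] E)
    (U : Ultrafilter ℕ) (hU : (U : Filter ℕ) ≤ cofinite)
    (hultra : ∀ f : ℕ → E, (∃ C : ℝ, ∀ k, ‖f k‖ ≤ C) →
      ∀ ε > (0 : ℝ), ∃ N : ℕ, ∀ n ≥ N,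
        {k : ℕ | ‖(T ^ n) (f k)‖ ≤ ε} ∈ U) :
    spectralRadius ℂ T < 1 ∧
      Tendsto (fun n : ℕ => ‖(T ^ n : E →L[ℂ] E)‖) atTop (𝓝 0) := by
  have hr : spectralRadius ℂ T < 1 := by
    nontriviality (E →L[ℂ] E)
    by_contra! hr
    obtain ⟨z, hz, hzr⟩ := spectrum.exists_nnnorm_eq_spectralRadius T
    have hz_frontier := spectrum.mem_frontier_of_spectralRadius_le hz hzr.ge
    have hz1 : 1 ≤ ‖z‖ := by exact_mod_cast hzr ▸ hr
    exact (norm_lt_one_of_mem_frontier_spectrum_of_ultrapower hU hultra hz_frontier).not_ge hz1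
  exact ⟨hr, tendsto_norm_pow_of_spectralRadius_lt_one hr⟩

/-- Let `T` be a power-bounded operator on a complex Banach space, let `U` be a free
ultrafilter on `ℕ`, and suppose the lifted powers `(T^𝒰)^n` converge strongly to `0` on
the ultrapower `E^𝒰` (expressed via representatives: for every bounded sequence `f` in
`E`, the ultrafilter limits of `‖T^n (f k)‖` tend to `0` as `n → ∞`).  Then the spectral
radius of `T` is strictly less than `1`, and consequently `‖T^n‖ → 0`. -/
theorem spectralRadius_lt_one_of_ultrapower_strong_convergence
    {E : Type*} [NormedAddCommGroup E] [NormedSpace ℂ E] [CompleteSpace E]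
    (T : E →L[ℂ] E) (hpb : ∃ M : ℝ, ∀ n : ℕ, ‖T ^ n‖ ≤ M)
    (U : Ultrafilter ℕ) (hU : (U : Filter ℕ) ≤ cofinite)
    (hultra : ∀ f : ℕ → E, (∃ C : ℝ, ∀ k, ‖f k‖ ≤ C) →
      ∀ ε > (0 : ℝ), ∃ N : ℕ, ∀ n ≥ N,
        {k : ℕ | ‖(T ^ n) (f k)‖ ≤ ε} ∈ U) :
    spectralRadius ℂ T < 1 ∧
      Tendsto (fun n : ℕ => ‖(T ^ n : E →L[ℂ] E)‖) atTop (𝓝 0) :=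
  spectralRadius_lt_one_of_ultrapower_strong_convergence_general T U hU hultra
end

section
/- Let E be an AL-space, h ∈ E₊ with ‖h‖ = 1, and (f_j)_{j∈J} a net in E₊ of vectors of norm 1 such that ‖(f_j − h)⁻‖ → 0. Then f_j → h in norm. -/
/-!
Write `x = f - h`. Since `x⁺ - x⁻ = f - h`, we have `x⁺ + h = f + x⁻`, a sum of positive
vectors on both sides; additivity of the norm and `‖f‖ = ‖h‖` give `‖x⁺‖ = ‖x⁻‖`. As
`|x| = x⁺ + x⁻`, this yields `‖f - h‖ = 2 ‖(f - h)⁻‖`, so the negative parts control the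
whole distance.
-/

open Filter Topology

section ALNorm

variable {E : Type*} [NormedAddCommGroup E] [Lattice E] [IsOrderedAddMonoid E]

theorem norm_eq_norm_posPart_add_norm_negPart [HasSolidNorm E]
    (hAL : ∀ f g : E, 0 ≤ f → 0 ≤ g → ‖f + g‖ = ‖f‖ + ‖g‖) (x : E) :
    ‖x‖ = ‖x⁺‖ + ‖x⁻‖ := by
  rw [← norm_abs_eq_norm, ← posPart_add_negPart]
  exact hAL _ _ (posPart_nonneg x) (negPart_nonneg x)

theorem norm_posPart_sub_eq_norm_negPart_sub
    (hAL : ∀ f g : E, 0 ≤ f → 0 ≤ g → ‖f + g‖ = ‖f‖ + ‖g‖) {f h : E} (hf : 0 ≤ f) (hh : 0 ≤ h)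
    (hfh : ‖f‖ = ‖h‖) : ‖(f - h)⁺‖ = ‖(f - h)⁻‖ := by
  have hsplit : (f - h)⁺ + h = f + (f - h)⁻ :=
    sub_eq_sub_iff_add_eq_add.mp (posPart_sub_negPart (f - h))
  have hnorms := congrArg norm hsplit
  rw [hAL _ _ (posPart_nonneg _) hh, hAL _ _ hf (negPart_nonneg _), hfh] at hnorms
  linarith

theorem norm_sub_eq_two_mul_norm_negPart_sub [HasSolidNorm E]
    (hAL : ∀ f g : E, 0 ≤ f → 0 ≤ g → ‖f + g‖ = ‖f‖ + ‖g‖) {f h : E} (hf : 0 ≤ f) (hh : 0 ≤ h)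
    (hfh : ‖f‖ = ‖h‖) : ‖f - h‖ = 2 * ‖(f - h)⁻‖ := by
  rw [norm_eq_norm_posPart_add_norm_negPart hAL,
    norm_posPart_sub_eq_norm_negPart_sub hAL hf hh hfh, two_mul]

end ALNorm

theorem tendsto_of_negPart_tendsto_zero_general
    {E : Type*} [NormedAddCommGroup E] [Lattice E] [HasSolidNorm E]
    [IsOrderedAddMonoid E]
    (hAL : ∀ f g : E, 0 ≤ f → 0 ≤ g → ‖f + g‖ = ‖f‖ + ‖g‖)
    (h : E) (hh : 0 ≤ h) (hnorm : ‖h‖ = 1)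
    {ι : Type*} (l : Filter ι) (f : ι → E)
    (hfpos : ∀ j, 0 ≤ f j) (hfnorm : ∀ j, ‖f j‖ = 1)
    (hlb : Tendsto (fun j => ‖(f j - h)⁻‖) l (𝓝 0)) :
    Tendsto f l (𝓝 h) := by
  rw [tendsto_iff_norm_sub_tendsto_zero]
  have hdist : ∀ j, ‖f j - h‖ = 2 * ‖(f j - h)⁻‖ := fun j =>
    norm_sub_eq_two_mul_norm_negPart_sub hAL (hfpos j) hh ((hfnorm j).trans hnorm.symm)
  simp_rw [hdist]
  simpa using hlb.const_mul 2

/-- Let `E` be an AL-space (a Banach lattice whose norm is additive on the positive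
cone), `h ∈ E₊` with `‖h‖ = 1`, and `(f_j)` a net of positive vectors of norm `1` such
that `‖(f_j - h)⁻‖ → 0`.  Then `f_j → h` in norm. -/
theorem tendsto_of_negPart_tendsto_zero
    {E : Type*} [NormedAddCommGroup E] [Lattice E] [HasSolidNorm E]
    [IsOrderedAddMonoid E] [NormedSpace ℝ E] [CompleteSpace E]
    (hAL : ∀ f g : E, 0 ≤ f → 0 ≤ g → ‖f + g‖ = ‖f‖ + ‖g‖)
    (h : E) (hh : 0 ≤ h) (hnorm : ‖h‖ = 1)
    {ι : Type*} (l : Filter ι) [l.NeBot] (f : ι → E)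
    (hfpos : ∀ j, 0 ≤ f j) (hfnorm : ∀ j, ‖f j‖ = 1)
    (hlb : Tendsto (fun j => ‖(f j - h)⁻‖) l (𝓝 0)) :
    Tendsto f l (𝓝 h) :=
  tendsto_of_negPart_tendsto_zero_general hAL h hh hnorm l f hfpos hfnorm hlb
end

section
/- Let E be an AL-space and (T_t)_{t∈J} a Markov semigroup (J = ℕ or (0,∞)) admitting a non-zero lower bound. Then the set H of all lower bounds for the semigroup has a maximum h_max satisfying 0 < ‖h_max‖ ≤ 1 and T_t h_max = h_max for all t ∈ J. -/
open Filter Topology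

/-!
The lower bounds form a closed, sup-closed set of positive vectors of norm at most `1` (test a
lower bound against a normalised one: the operators preserve the norm of positive vectors).
The norm of an AL-space is additive on the positive cone, so an increasing sequence of lower
bounds whose norms approach the supremum of all their norms is Cauchy, and its limit is the
greatest lower bound `h_max`. Each `T_t` maps lower bounds to lower bounds, so
`T_t h_max ≤ h_max`; both have the same norm, hence they are equal.
-/

section LatticeOrderedGroup

variable {α : Type*} [AddCommGroup α] [Lattice α] [IsOrderedAddMonoid α]

theorem negPart_sub_sup_le (c a b : α) : (c - a ⊔ b)⁻ ≤ (c - a)⁻ + (c - b)⁻ := by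
  rw [sub_sup, negPart_def, negPart_def, negPart_def, neg_inf]
  refine sup_le (sup_le ?_ ?_) ?_
  · exact le_sup_left.trans (le_add_of_nonneg_right le_sup_right)
  · exact le_sup_left.trans (le_add_of_nonneg_left le_sup_right)
  · exact add_nonneg le_sup_right le_sup_right

theorem le_add_negPart_sub (h y : α) : h ≤ y + (y - h)⁻ := by
  rw [← posPart_neg, neg_sub]
  exact sub_le_iff_le_add'.1 (le_posPart _)

theorem negPart_map_le {β F : Type*} [AddCommGroup β] [Lattice β] [IsOrderedAddMonoid β]
    [FunLike F α β] [AddMonoidHomClass F α β] {S : F} (hS : ∀ f, 0 ≤ f → 0 ≤ S f) (x : α) :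
    (S x)⁻ ≤ S x⁻ := by
  have hx : S x = S x⁺ - S x⁻ := by rw [← map_sub, posPart_sub_negPart]
  rw [← posPart_neg, hx, neg_sub]
  calc (S x⁻ - S x⁺)⁺ ≤ (S x⁻)⁺ := posPart_mono (sub_le_self _ (hS _ (posPart_nonneg x)))
    _ = S x⁻ := posPart_eq_self.2 (hS _ (negPart_nonneg x))

end LatticeOrderedGroup

section SolidNorm

variable {E : Type*} [NormedAddCommGroup E] [Lattice E] [HasSolidNorm E] [IsOrderedAddMonoid E]

theorem HasSolidNorm.norm_le_norm_of_nonneg_of_le {a b : E} (ha : 0 ≤ a) (hab : a ≤ b) :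
    ‖a‖ ≤ ‖b‖ :=
  norm_le_norm_of_abs_le_abs (by rw [abs_of_nonneg ha]; exact hab.trans (le_abs_self b))

theorem norm_negPart_sub_le_add (y g h : E) : ‖(y - h)⁻‖ ≤ ‖(y - g)⁻‖ + ‖g - h‖ :=
  calc ‖(y - h)⁻‖ ≤ ‖(y - g)⁻‖ + ‖(y - h)⁻ - (y - g)⁻‖ := norm_le_insert' _ _
    _ ≤ ‖(y - g)⁻‖ + ‖(y - h) - (y - g)‖ := by
      gcongr
      simpa using lipschitzWith_negPart.norm_sub_le (y - h) (y - g)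
    _ = ‖(y - g)⁻‖ + ‖g - h‖ := by rw [sub_sub_sub_cancel_left]

/-- No `PosSMulMono ℝ E` is assumed, so this goes through dyadic rationals: halving preserves
positivity (`nsmul_two_semiclosed`) and the positive cone is closed. -/
theorem HasSolidNorm.smul_nonneg [NormedSpace ℝ E] {x : E} (hx : 0 ≤ x) {r : ℝ} (hr : 0 ≤ r) :
    0 ≤ r • x := by
  have half : ∀ y : E, 0 ≤ y → 0 ≤ (2⁻¹ : ℝ) • y := fun y hy =>
    nsmul_two_semiclosed <| by
      rwa [two_nsmul, ← two_smul ℝ, smul_smul, mul_inv_cancel₀ two_ne_zero, one_smul]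
  have dyadic : ∀ k m : ℕ, 0 ≤ ((m : ℝ) / 2 ^ k) • x := by
    intro k m
    induction k with
    | zero => simpa [Nat.cast_smul_eq_nsmul] using nsmul_nonneg hx m
    | succ k ih =>
      rw [pow_succ, ← div_div, div_eq_inv_mul _ (2 : ℝ), mul_smul]
      exact half _ ih
  have hlim : Tendsto (fun k : ℕ => ((⌊r * 2 ^ k⌋₊ : ℝ) / 2 ^ k) • x) atTop (𝓝 (r • x)) :=
    ((tendsto_nat_floor_mul_div_atTop hr).comp
      (tendsto_pow_atTop_atTop_of_one_lt one_lt_two)).smul_const x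
  exact isClosed_nonneg.mem_of_tendsto hlim (Eventually.of_forall fun k => dyadic k _)

theorem exists_nonneg_norm_eq_one [NormedSpace ℝ E] {x : E} (hx : 0 ≤ x) (hx0 : x ≠ 0) :
    ∃ f : E, 0 ≤ f ∧ ‖f‖ = 1 :=
  ⟨‖x‖⁻¹ • x, HasSolidNorm.smul_nonneg hx (by positivity), norm_smul_inv_norm hx0⟩

end SolidNorm

section ALNorm

def IsALNorm (E : Type*) [NormedAddCommGroup E] [Lattice E] : Prop :=
  ∀ f g : E, 0 ≤ f → 0 ≤ g → ‖f + g‖ = ‖f‖ + ‖g‖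

variable {E : Type*} [NormedAddCommGroup E] [Lattice E] [IsOrderedAddMonoid E]

theorem IsALNorm.norm_sub_of_le (hAL : IsALNorm E) {a b : E} (ha : 0 ≤ a) (hab : a ≤ b) :
    ‖b - a‖ = ‖b‖ - ‖a‖ := by
  have := hAL a (b - a) ha (sub_nonneg.2 hab)
  rw [add_sub_cancel] at this
  linarith

theorem IsALNorm.eq_of_le_of_norm_le (hAL : IsALNorm E) {a b : E} (ha : 0 ≤ a) (hab : a ≤ b)
    (hba : ‖b‖ ≤ ‖a‖) : a = b := by
  have : ‖b - a‖ = 0 := by linarith [hAL.norm_sub_of_le ha hab, norm_nonneg (b - a)]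
  exact (sub_eq_zero.1 (norm_eq_zero.1 this)).symm

variable [HasSolidNorm E]

theorem IsALNorm.cauchySeq_of_monotone (hAL : IsALNorm E) {g : ℕ → E} (hg : Monotone g)
    (hg0 : 0 ≤ g 0) (hbdd : BddAbove (Set.range fun n => ‖g n‖)) : CauchySeq g := by
  have hnonneg : ∀ n, 0 ≤ g n := fun n => hg0.trans (hg n.zero_le)
  have hnorm : CauchySeq fun n => ‖g n‖ :=
    (tendsto_atTop_ciSup (fun m n hmn =>
      HasSolidNorm.norm_le_norm_of_nonneg_of_le (hnonneg m) (hg hmn)) hbdd).cauchySeq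
  rw [Metric.cauchySeq_iff'] at hnorm ⊢
  intro ε hε
  obtain ⟨N, hN⟩ := hnorm ε hε
  refine ⟨N, fun n hn => ?_⟩
  rw [dist_eq_norm, hAL.norm_sub_of_le (hnonneg N) (hg hn)]
  exact (le_abs_self _).trans_lt (hN n hn)

theorem IsALNorm.exists_isGreatest [CompleteSpace E] (hAL : IsALNorm E) {S : Set E}
    (hS : ∀ s ∈ S, 0 ≤ s) (hne : S.Nonempty) (hsup : SupClosed S) (hclosed : IsClosed S)
    (hbdd : BddAbove ((‖·‖) '' S)) : ∃ m, IsGreatest S m := by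
  set c := sSup ((‖·‖) '' S)
  obtain ⟨u, -, hu, huS⟩ := exists_seq_tendsto_sSup (hne.image _) hbdd
  choose s hsS hsu using huS
  have hgS : ∀ n, partialSups s n ∈ S := fun n => by
    rw [partialSups_apply]
    exact hsup.finsetSup'_mem _ fun i _ => hsS i
  have hgc : ∀ n, ‖partialSups s n‖ ≤ c := fun n => le_csSup hbdd ⟨_, hgS n, rfl⟩
  obtain ⟨m, hm⟩ := cauchySeq_tendsto_of_complete <|
    hAL.cauchySeq_of_monotone (partialSups s).monotone (hS _ (hgS 0))
      ⟨c, Set.forall_mem_range.2 hgc⟩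
  have hmS : m ∈ S := hclosed.mem_of_tendsto hm (Eventually.of_forall hgS)
  have hcm : c ≤ ‖m‖ := le_of_tendsto' hu fun n => hsu n ▸
    HasSolidNorm.norm_le_norm_of_nonneg_of_le (hS _ (hsS n))
      ((le_partialSups s n).trans ((partialSups s).monotone.ge_of_tendsto hm n))
  refine ⟨m, hmS, fun t ht => ?_⟩
  have hsup_le : ‖t ⊔ m‖ ≤ ‖m‖ := (le_csSup hbdd ⟨_, hsup ht hmS, rfl⟩).trans hcm
  exact sup_eq_right.1 (hAL.eq_of_le_of_norm_le (hS m hmS) le_sup_right hsup_le).symm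

end ALNorm

section LowerBound

variable {E : Type*} [NormedAddCommGroup E] [Lattice E] [NormedSpace ℝ E]

structure IsMarkov (S : E →L[ℝ] E) : Prop where
  map_nonneg : ∀ f, 0 ≤ f → 0 ≤ S f
  norm_map : ∀ f, 0 ≤ f → ‖S f‖ = ‖f‖

theorem IsMarkov.comp {S R : E →L[ℝ] E} (hS : IsMarkov S) (hR : IsMarkov R) :
    IsMarkov (S.comp R) :=
  ⟨fun f hf => hS.map_nonneg _ (hR.map_nonneg f hf),
    fun f hf => (hS.norm_map _ (hR.map_nonneg f hf)).trans (hR.norm_map f hf)⟩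

theorem IsMarkov.pow {S : E →L[ℝ] E} (hS : IsMarkov S) (n : ℕ) : IsMarkov (S ^ n) := by
  induction n with
  | zero => exact ⟨fun f hf => hf, fun f _ => rfl⟩
  | succ n ih => rw [pow_succ']; exact hS.comp ih

variable [HasSolidNorm E] [IsOrderedAddMonoid E]

theorem IsMarkov.norm_negPart_map_le {S : E →L[ℝ] E} (hS : IsMarkov S) (x : E) :
    ‖(S x)⁻‖ ≤ ‖x⁻‖ :=
  (HasSolidNorm.norm_le_norm_of_nonneg_of_le (negPart_nonneg _)
    (negPart_map_le hS.map_nonneg x)).trans_eq (hS.norm_map _ (negPart_nonneg x))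

variable {ι : Type*} {l : Filter ι} {T : ι → E →L[ℝ] E}

def IsAsymptoticLowerBound (T : ι → E →L[ℝ] E) (l : Filter ι) (h : E) : Prop :=
  0 ≤ h ∧ ∀ f : E, 0 ≤ f → ‖f‖ = 1 → Tendsto (fun i => ‖(T i f - h)⁻‖) l (𝓝 0)

theorem supClosed_setOf_isAsymptoticLowerBound :
    SupClosed {h | IsAsymptoticLowerBound T l h} := by
  rintro a ⟨ha, ha_lim⟩ b ⟨-, hb_lim⟩
  refine ⟨le_sup_of_le_left ha, fun f hf hf1 => ?_⟩
  refine squeeze_zero (fun i => norm_nonneg _) (fun i => ?_)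
    (by simpa using (ha_lim f hf hf1).add (hb_lim f hf hf1))
  exact (HasSolidNorm.norm_le_norm_of_nonneg_of_le (negPart_nonneg _)
    (negPart_sub_sup_le _ _ _)).trans (norm_add_le _ _)

theorem isClosed_setOf_isAsymptoticLowerBound :
    IsClosed {h | IsAsymptoticLowerBound T l h} := by
  refine isClosed_of_closure_subset fun h hh => ?_
  obtain ⟨g, hgH, hg⟩ := mem_closure_iff_seq_limit.1 hh
  refine ⟨isClosed_nonneg.mem_of_tendsto hg (Eventually.of_forall fun n => (hgH n).1),
    fun f hf hf1 => ?_⟩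
  refine tendsto_order.2 ⟨fun a ha => Eventually.of_forall fun i => ha.trans_le (norm_nonneg _),
    fun ε hε => ?_⟩
  obtain ⟨N, hN⟩ := (tendsto_iff_norm_sub_tendsto_zero.1 hg).eventually_lt_const (half_pos hε)
    |>.exists
  filter_upwards [((hgH N).2 f hf hf1).eventually_lt_const (half_pos hε)] with i hi
  linarith [norm_negPart_sub_le_add (T i f) (g N) h]

theorem IsAsymptoticLowerBound.norm_le_one [l.NeBot]
    (hT : ∀ᶠ i in l, ∀ f, 0 ≤ f → ‖T i f‖ = ‖f‖) {f : E} (hf : 0 ≤ f) (hf1 : ‖f‖ = 1) {h : E}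
    (hh : IsAsymptoticLowerBound T l h) : ‖h‖ ≤ 1 := by
  refine ge_of_tendsto (by simpa using (hh.2 f hf hf1).const_add 1) ?_
  filter_upwards [hT] with i hi
  calc ‖h‖ ≤ ‖T i f + (T i f - h)⁻‖ :=
        HasSolidNorm.norm_le_norm_of_nonneg_of_le hh.1 (le_add_negPart_sub h (T i f))
    _ ≤ 1 + ‖(T i f - h)⁻‖ := by rw [← hf1, ← hi f hf]; exact norm_add_le _ _

theorem IsAsymptoticLowerBound.map {S : E →L[ℝ] E} (hS : IsMarkov S) {φ : ι → ι}
    (hφ : Tendsto φ l l) (hT : ∀ᶠ i in l, T i = S.comp (T (φ i))) {h : E}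
    (hh : IsAsymptoticLowerBound T l h) : IsAsymptoticLowerBound T l (S h) := by
  refine ⟨hS.map_nonneg h hh.1, fun f hf hf1 => ?_⟩
  refine squeeze_zero' (Eventually.of_forall fun i => norm_nonneg _) ?_ ((hh.2 f hf hf1).comp hφ)
  filter_upwards [hT] with i hi
  rw [hi, ContinuousLinearMap.comp_apply, ← map_sub]
  exact hS.norm_negPart_map_le _

theorem IsALNorm.exists_isGreatest_isAsymptoticLowerBound [CompleteSpace E] [l.NeBot]
    (hAL : IsALNorm E) (hT : ∀ᶠ i in l, ∀ f, 0 ≤ f → ‖T i f‖ = ‖f‖) {h₀ : E}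
    (h₀_lb : IsAsymptoticLowerBound T l h₀) (h₀_ne : h₀ ≠ 0) :
    ∃ m, IsGreatest {h | IsAsymptoticLowerBound T l h} m ∧ 0 < ‖m‖ ∧ ‖m‖ ≤ 1 := by
  obtain ⟨f, hf, hf1⟩ := exists_nonneg_norm_eq_one h₀_lb.1 h₀_ne
  have hle_one : ∀ h, IsAsymptoticLowerBound T l h → ‖h‖ ≤ 1 := fun h hh =>
    hh.norm_le_one hT hf hf1
  obtain ⟨m, hm⟩ := hAL.exists_isGreatest (fun h hh => hh.1) ⟨h₀, h₀_lb⟩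
    supClosed_setOf_isAsymptoticLowerBound isClosed_setOf_isAsymptoticLowerBound
    ⟨1, by rintro _ ⟨h, hh, rfl⟩; exact hle_one h hh⟩
  exact ⟨m, hm, (norm_pos_iff.2 h₀_ne).trans_le
    (HasSolidNorm.norm_le_norm_of_nonneg_of_le h₀_lb.1 (hm.2 h₀_lb)), hle_one m hm.1⟩

theorem IsALNorm.apply_eq_self_of_isGreatest (hAL : IsALNorm E) {S : E →L[ℝ] E}
    (hS : IsMarkov S) {φ : ι → ι} (hφ : Tendsto φ l l) (hT : ∀ᶠ i in l, T i = S.comp (T (φ i)))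
    {m : E} (hm : IsGreatest {h | IsAsymptoticLowerBound T l h} m) : S m = m :=
  hAL.eq_of_le_of_norm_le (hS.map_nonneg m hm.1.1) (hm.2 (hm.1.map hS hφ hT))
    (hS.norm_map m hm.1.1).ge

end LowerBound

/-- For a Markov semigroup on an AL-space admitting a non-zero lower bound, the set of
all lower bounds has a maximum `h_max`, which satisfies `0 < ‖h_max‖ ≤ 1` and is a fixed
point of the semigroup.  Both the time-discrete case `J = ℕ` (powers of a single Markov
operator) and the case `J = (0,∞)` are covered. -/
theorem markov_semigroup_maximal_lower_bound
    {E : Type*} [NormedAddCommGroup E] [Lattice E] [HasSolidNorm E]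
    [IsOrderedAddMonoid E] [NormedSpace ℝ E] [CompleteSpace E]
    (hAL : ∀ f g : E, 0 ≤ f → 0 ≤ g → ‖f + g‖ = ‖f‖ + ‖g‖) :
    -- the time-discrete case `J = ℕ`
    (∀ S : E →L[ℝ] E,
      (∀ f : E, 0 ≤ f → 0 ≤ S f) → (∀ f : E, 0 ≤ f → ‖S f‖ = ‖f‖) →
      (∃ h : E, 0 ≤ h ∧ h ≠ 0 ∧ ∀ f : E, 0 ≤ f → ‖f‖ = 1 →
        Tendsto (fun n : ℕ => ‖((S ^ n) f - h)⁻‖) atTop (𝓝 0)) →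
      ∃ hmax : E, 0 ≤ hmax ∧
        (∀ f : E, 0 ≤ f → ‖f‖ = 1 →
          Tendsto (fun n : ℕ => ‖((S ^ n) f - hmax)⁻‖) atTop (𝓝 0)) ∧
        (∀ h : E, 0 ≤ h → (∀ f : E, 0 ≤ f → ‖f‖ = 1 →
          Tendsto (fun n : ℕ => ‖((S ^ n) f - h)⁻‖) atTop (𝓝 0)) → h ≤ hmax) ∧
        0 < ‖hmax‖ ∧ ‖hmax‖ ≤ 1 ∧ S hmax = hmax) ∧
    -- the case `J = (0, ∞)`
    (∀ T : ℝ → E →L[ℝ] E,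
      (∀ s t : ℝ, 0 < s → 0 < t → T (s + t) = (T s).comp (T t)) →
      (∀ t : ℝ, 0 < t → ∀ f : E, 0 ≤ f → 0 ≤ T t f) →
      (∀ t : ℝ, 0 < t → ∀ f : E, 0 ≤ f → ‖T t f‖ = ‖f‖) →
      (∃ h : E, 0 ≤ h ∧ h ≠ 0 ∧ ∀ f : E, 0 ≤ f → ‖f‖ = 1 →
        Tendsto (fun t : ℝ => ‖(T t f - h)⁻‖) atTop (𝓝 0)) →
      ∃ hmax : E, 0 ≤ hmax ∧
        (∀ f : E, 0 ≤ f → ‖f‖ = 1 →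
          Tendsto (fun t : ℝ => ‖(T t f - hmax)⁻‖) atTop (𝓝 0)) ∧
        (∀ h : E, 0 ≤ h → (∀ f : E, 0 ≤ f → ‖f‖ = 1 →
          Tendsto (fun t : ℝ => ‖(T t f - h)⁻‖) atTop (𝓝 0)) → h ≤ hmax) ∧
        0 < ‖hmax‖ ∧ ‖hmax‖ ≤ 1 ∧ ∀ t : ℝ, 0 < t → T t hmax = hmax) := by
  replace hAL : IsALNorm E := hAL
  constructor
  · rintro S hS_nonneg hS_norm ⟨h₀, h₀_nonneg, h₀_ne, h₀_lim⟩
    have hS : IsMarkov S := ⟨hS_nonneg, hS_norm⟩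
    obtain ⟨m, hm, hm_pos, hm_le⟩ := hAL.exists_isGreatest_isAsymptoticLowerBound
      (T := fun n => S ^ n) (Eventually.of_forall fun n => (hS.pow n).norm_map)
      ⟨h₀_nonneg, h₀_lim⟩ h₀_ne
    have hshift : ∀ᶠ n in atTop, S ^ n = S.comp (S ^ (n - 1)) := by
      filter_upwards [eventually_ge_atTop 1] with n hn
      rw [← ContinuousLinearMap.mul_def, ← pow_succ', Nat.sub_add_cancel hn]
    exact ⟨m, hm.1.1, hm.1.2, fun h hh hlim => hm.2 ⟨hh, hlim⟩, hm_pos, hm_le,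
      hAL.apply_eq_self_of_isGreatest hS (tendsto_sub_atTop_nat 1) hshift hm⟩
  · rintro T hT_semi hT_nonneg hT_norm ⟨h₀, h₀_nonneg, h₀_ne, h₀_lim⟩
    have hT : ∀ t, 0 < t → IsMarkov (T t) := fun t ht => ⟨hT_nonneg t ht, hT_norm t ht⟩
    obtain ⟨m, hm, hm_pos, hm_le⟩ := hAL.exists_isGreatest_isAsymptoticLowerBound
      (eventually_gt_atTop 0 |>.mono fun t ht => (hT t ht).norm_map) ⟨h₀_nonneg, h₀_lim⟩ h₀_ne
    refine ⟨m, hm.1.1, hm.1.2, fun h hh hlim => hm.2 ⟨hh, hlim⟩, hm_pos, hm_le, fun s hs => ?_⟩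
    have hshift : ∀ᶠ t in atTop, T t = (T s).comp (T (t - s)) := by
      filter_upwards [eventually_gt_atTop s] with t ht
      rw [← hT_semi s (t - s) hs (sub_pos.2 ht), add_sub_cancel]
    exact hAL.apply_eq_self_of_isGreatest (hT s hs)
      (tendsto_atTop_add_const_right _ (-s) tendsto_id) hshift hm
end

section
/- Let E be a Banach lattice and (T_t)_{t∈J} a bounded positive semigroup (J = ℕ or (0,∞)). If there exists a non-zero lower bound h for the semigroup, then there is an equivalent lattice norm ‖·‖₁ on E which is additive on the positive cone, i.e. (E,‖·‖₁) is an AL-space. -/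
/-!
Choose a positive functional `φ` with `‖φ‖ ≤ 1` and `φ h = ‖h‖` (Hahn–Banach for the sublinear
functional `x ↦ ‖x⁺‖`) and an ultrafilter `U` finer than the tails of `J`, and put
`‖f‖₁ := lim_U φ (T_t |f|)`; the limit exists because the semigroup is bounded. Positivity of the
`T_t` makes `‖·‖₁` a lattice seminorm which is additive on the positive cone and bounded by
`M ‖·‖`. For `f ≥ 0` with `‖f‖ = 1` we have `T_t f ≥ h - (T_t f - h)⁻`, and the error term tends
to `0`, so `‖f‖₁ ≥ φ h = ‖h‖`: this is the lower estimate.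
-/

open Filter Topology

section LatticeGroup

variable {E : Type*} [Lattice E] [AddCommGroup E] [IsOrderedAddMonoid E]

lemma neg_negPart_le (x : E) : -x⁻ ≤ x := by
  simpa using sub_le_sub_right (posPart_nonneg x) x⁻

lemma posPart_le_abs (x : E) : x⁺ ≤ |x| := by
  rw [← posPart_add_negPart]
  exact le_add_of_nonneg_right (negPart_nonneg x)

lemma posPart_add_le (x y : E) : (x + y)⁺ ≤ x⁺ + y⁺ :=
  sup_le (add_le_add (le_posPart x) (le_posPart y))
    (add_nonneg (posPart_nonneg x) (posPart_nonneg y))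

lemma dyadic_smul_nonneg [Module ℝ E] {f : E} (hf : 0 ≤ f) (k m : ℕ) :
    0 ≤ ((m : ℝ) / 2 ^ k) • f := by
  induction k with
  | zero => simpa [Nat.cast_smul_eq_nsmul] using nsmul_nonneg hf m
  | succ k ih =>
    refine nsmul_two_semiclosed ?_
    rw [two_nsmul, ← add_smul]
    convert ih using 2
    ring

end LatticeGroup

section NormedLattice

variable {E : Type*} [NormedAddCommGroup E] [Lattice E] [HasSolidNorm E] [IsOrderedAddMonoid E]

lemma norm_le_norm_of_nonneg_of_le {x y : E} (hx : 0 ≤ x) (hxy : x ≤ y) : ‖x‖ ≤ ‖y‖ :=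
  norm_le_norm_of_abs_le_abs <| by rwa [abs_of_nonneg hx, abs_of_nonneg (hx.trans hxy)]

lemma norm_posPart_le (x : E) : ‖x⁺‖ ≤ ‖x‖ :=
  norm_le_norm_of_abs_le_abs <| by rw [abs_of_nonneg (posPart_nonneg x)]; exact posPart_le_abs x

lemma norm_posPart_add_le (x y : E) : ‖(x + y)⁺‖ ≤ ‖x⁺‖ + ‖y⁺‖ :=
  (norm_le_norm_of_nonneg_of_le (posPart_nonneg _) (posPart_add_le x y)).trans (norm_add_le _ _)

end NormedLattice

section LatticeModule

variable {E : Type*} [NormedAddCommGroup E] [Lattice E] [HasSolidNorm E] [IsOrderedAddMonoid E]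
  [NormedSpace ℝ E]

/-- No compatibility of the order with the scalar multiplication is assumed: the positive cone
is closed and stable under halving, hence stable under multiplication by the nonnegative dyadic
rationals, which are dense in `[0, ∞)`. -/
instance HasSolidNorm.toPosSMulMono : PosSMulMono ℝ E :=
  PosSMulMono.of_smul_nonneg fun a ha f hf => by
    have hdyadic : Tendsto (fun k : ℕ => (⌊a * 2 ^ k⌋₊ : ℝ) / 2 ^ k) atTop (𝓝 a) := by
      simpa [Function.comp_def] using
        (tendsto_nat_floor_mul_div_atTop ha).comp (tendsto_pow_atTop_atTop_of_one_lt one_lt_two)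
    exact isClosed_nonneg.mem_of_tendsto (hdyadic.smul_const f)
      (.of_forall fun k => dyadic_smul_nonneg hf k _)

lemma smul_sup_of_pos {a : ℝ} (ha : 0 < a) (x y : E) : a • (x ⊔ y) = a • x ⊔ a • y :=
  (OrderIso.smulRight ha).map_sup x y

lemma posPart_smul_of_pos {a : ℝ} (ha : 0 < a) (x : E) : (a • x)⁺ = a • x⁺ := by
  rw [posPart_def, posPart_def, smul_sup_of_pos ha, smul_zero]

lemma abs_real_smul (a : ℝ) (x : E) : |a • x| = |a| • |x| := by
  have hpos : ∀ b : ℝ, 0 < b → |b • x| = b • |x| := fun b hb => by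
    simp only [abs, smul_sup_of_pos hb, smul_neg]
  rcases lt_trichotomy a 0 with ha | rfl | ha
  · rw [← abs_neg, ← neg_smul, hpos _ (neg_pos.2 ha), abs_of_neg ha]
  · simp
  · rw [hpos a ha, abs_of_pos ha]

lemma exists_linearMap_le_norm_posPart {h : E} (hh : 0 ≤ h) :
    ∃ ψ : E →ₗ[ℝ] ℝ, (∀ x, ψ x ≤ ‖x⁺‖) ∧ ψ h = ‖h‖ := by
  rcases eq_or_ne h 0 with rfl | hh0
  · exact ⟨0, fun x => norm_nonneg _, by simp⟩
  set ψ₀ : E →ₗ.[ℝ] ℝ := LinearPMap.mkSpanSingleton h ‖h‖ hh0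
  have hψ₀ : ∀ x : ψ₀.domain, ψ₀ x ≤ ‖(x : E)⁺‖ := by
    rintro ⟨x, hx⟩
    obtain ⟨a, rfl⟩ := Submodule.mem_span_singleton.1 hx
    rw [LinearPMap.mkSpanSingleton'_apply, RingHom.id_apply, smul_eq_mul]
    rcases lt_or_ge 0 a with ha | ha
    · rw [posPart_smul_of_pos ha, posPart_eq_self.2 hh, norm_smul, Real.norm_of_nonneg ha.le]
    · exact (mul_nonpos_of_nonpos_of_nonneg ha (norm_nonneg h)).trans (norm_nonneg _)
  obtain ⟨ψ, hψext, hψ⟩ := exists_extension_of_le_sublinear ψ₀ (fun x => ‖x⁺‖)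
    (fun c hc x => by rw [posPart_smul_of_pos hc, norm_smul, Real.norm_of_nonneg hc.le])
    norm_posPart_add_le hψ₀
  refine ⟨ψ, hψ, ?_⟩
  rw [hψext ⟨h, Submodule.mem_span_singleton_self h⟩, LinearPMap.mkSpanSingleton_apply]

lemma exists_monotone_dual_vector {h : E} (hh : 0 ≤ h) :
    ∃ φ : E →L[ℝ] ℝ, Monotone φ ∧ ‖φ‖ ≤ 1 ∧ φ h = ‖h‖ := by
  obtain ⟨ψ, hψ, hψh⟩ := exists_linearMap_le_norm_posPart hh
  have hbound : ∀ x, ‖ψ x‖ ≤ 1 * ‖x‖ := fun x => by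
    have hneg : -ψ x ≤ ‖x‖ := by
      simpa using (hψ (-x)).trans ((norm_posPart_le (-x)).trans_eq (norm_neg x))
    rw [Real.norm_eq_abs, abs_le, one_mul]
    exact ⟨neg_le.1 hneg, (hψ x).trans (norm_posPart_le x)⟩
  refine ⟨ψ.mkContinuous 1 hbound, fun x y hxy => ?_, ψ.mkContinuous_norm_le zero_le_one hbound,
    hψh⟩
  have := hψ (x - y)
  rw [posPart_eq_zero.2 (sub_nonpos.2 hxy), norm_zero, map_sub] at this
  simpa using sub_nonpos.1 this

end LatticeModule

lemma Ultrafilter.exists_tendsto_of_eventually_abs_le {ι : Type*} (U : Ultrafilter ι)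
    {u : ι → ℝ} {C : ℝ} (hu : ∀ᶠ j in U, |u j| ≤ C) : ∃ x, Tendsto u U (𝓝 x) := by
  obtain ⟨x, -, hx⟩ := (isCompact_Icc (a := -C) (b := C)).ultrafilter_le_nhds (U.map u)
    (le_principal_iff.2 <| hu.mono fun _ => abs_le.1)
  exact ⟨x, hx⟩

lemma pow_apply_nonneg {E : Type*} [NormedAddCommGroup E] [PartialOrder E] [NormedSpace ℝ E]
    {S : E →L[ℝ] E} (hS : ∀ f, 0 ≤ f → 0 ≤ S f) (n : ℕ) {f : E} (hf : 0 ≤ f) :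
    0 ≤ (S ^ n) f := by
  induction n generalizing f with
  | zero => simpa using hf
  | succ n ih => rw [pow_succ, mul_apply_eq_comp]; exact ih (hS f hf)

lemma monotone_apply_apply {E : Type*} [NormedAddCommGroup E] [PartialOrder E]
    [IsOrderedAddMonoid E] [NormedSpace ℝ E] {φ : E →L[ℝ] ℝ} (hφ : Monotone φ)
    {S : E →L[ℝ] E} (hS : ∀ f, 0 ≤ f → 0 ≤ S f) : Monotone fun f => φ (S f) := fun f g hfg =>
  hφ <| sub_nonneg.1 <| by simpa only [map_sub] using hS _ (sub_nonneg.2 hfg)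

section Renorming

variable {E : Type*} [NormedAddCommGroup E] [Lattice E] [IsOrderedAddMonoid E] [NormedSpace ℝ E]
  {ι : Type*} {U : Ultrafilter ι} {φ : E →L[ℝ] ℝ} {T : ι → E →L[ℝ] E} {M : ℝ}

variable (U φ T) in
/-- The paper's `‖f‖₁ = lim_U ⟨φ, T_t |f|⟩`. -/
noncomputable def ultralimitNorm (f : E) : ℝ := limUnder (U : Filter ι) fun j => φ (T j |f|)

lemma ultralimitNorm_abs (f : E) : ultralimitNorm U φ T |f| = ultralimitNorm U φ T f := by
  simp only [ultralimitNorm, abs_abs]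

variable [HasSolidNorm E]

lemma abs_apply_apply_abs_le {S : E →L[ℝ] E} (hS : ‖S‖ ≤ M) (f : E) :
    |φ (S |f|)| ≤ ‖φ‖ * M * ‖f‖ := by
  calc |φ (S |f|)| ≤ ‖φ‖ * ‖S |f|‖ := φ.le_opNorm _
    _ ≤ ‖φ‖ * (‖S‖ * ‖f‖) := by
        gcongr; exact (S.le_opNorm |f|).trans_eq (by rw [norm_abs_eq_norm])
    _ ≤ ‖φ‖ * M * ‖f‖ := by rw [← mul_assoc]; gcongr

lemma tendsto_ultralimitNorm (hT : ∀ᶠ j in U, ‖T j‖ ≤ M) (f : E) :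
    Tendsto (fun j => φ (T j |f|)) U (𝓝 (ultralimitNorm U φ T f)) :=
  tendsto_nhds_limUnder <| U.exists_tendsto_of_eventually_abs_le <|
    hT.mono fun _ hj => abs_apply_apply_abs_le hj f

lemma ultralimitNorm_le (hT : ∀ᶠ j in U, ‖T j‖ ≤ M) (f : E) :
    ultralimitNorm U φ T f ≤ ‖φ‖ * M * ‖f‖ :=
  le_of_tendsto (tendsto_ultralimitNorm hT f) <|
    hT.mono fun _ hj => (le_abs_self _).trans (abs_apply_apply_abs_le hj f)

lemma ultralimitNorm_smul (hT : ∀ᶠ j in U, ‖T j‖ ≤ M) (a : ℝ) (f : E) :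
    ultralimitNorm U φ T (a • f) = |a| * ultralimitNorm U φ T f := by
  refine tendsto_nhds_unique (tendsto_ultralimitNorm hT (a • f)) ?_
  simpa only [abs_real_smul, map_smul, smul_eq_mul] using
    (tendsto_ultralimitNorm hT f).const_mul |a|

lemma ultralimitNorm_add_of_nonneg (hT : ∀ᶠ j in U, ‖T j‖ ≤ M) {f g : E} (hf : 0 ≤ f)
    (hg : 0 ≤ g) :
    ultralimitNorm U φ T (f + g) = ultralimitNorm U φ T f + ultralimitNorm U φ T g := by
  refine tendsto_nhds_unique (tendsto_ultralimitNorm hT (f + g)) ?_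
  simpa only [abs_of_nonneg hf, abs_of_nonneg hg, abs_of_nonneg (add_nonneg hf hg), map_add]
    using (tendsto_ultralimitNorm hT f).add (tendsto_ultralimitNorm hT g)

lemma ultralimitNorm_mono (hT : ∀ᶠ j in U, ‖T j‖ ≤ M)
    (hpos : ∀ᶠ j in U, ∀ f, 0 ≤ f → 0 ≤ T j f) (hφ : Monotone φ) {f g : E} (hfg : |f| ≤ |g|) :
    ultralimitNorm U φ T f ≤ ultralimitNorm U φ T g :=
  le_of_tendsto_of_tendsto (tendsto_ultralimitNorm hT f) (tendsto_ultralimitNorm hT g) <|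
    hpos.mono fun _ hj => monotone_apply_apply hφ hj hfg

lemma ultralimitNorm_add_le (hT : ∀ᶠ j in U, ‖T j‖ ≤ M)
    (hpos : ∀ᶠ j in U, ∀ f, 0 ≤ f → 0 ≤ T j f) (hφ : Monotone φ) (f g : E) :
    ultralimitNorm U φ T (f + g) ≤ ultralimitNorm U φ T f + ultralimitNorm U φ T g := by
  refine le_of_tendsto_of_tendsto (tendsto_ultralimitNorm hT (f + g))
    ((tendsto_ultralimitNorm hT f).add (tendsto_ultralimitNorm hT g)) ?_
  filter_upwards [hpos] with j hj
  simpa only [map_add] using monotone_apply_apply hφ hj (abs_add_le f g)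

lemma apply_le_ultralimitNorm (hT : ∀ᶠ j in U, ‖T j‖ ≤ M) (hφ : Monotone φ) {h e : E}
    (he : 0 ≤ e) (hlb : Tendsto (fun j => ‖(T j e - h)⁻‖) U (𝓝 0)) :
    φ h ≤ ultralimitNorm U φ T e := by
  have hlim : Tendsto (fun j => φ h - ‖φ‖ * ‖(T j e - h)⁻‖) U (𝓝 (φ h)) := by
    simpa using tendsto_const_nhds.sub (hlb.const_mul ‖φ‖)
  refine le_of_tendsto_of_tendsto' hlim (tendsto_ultralimitNorm hT e) fun j => ?_
  have hle : h - (T j e - h)⁻ ≤ T j |e| := by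
    simpa [abs_of_nonneg he, sub_eq_add_neg, add_comm] using
      add_le_add_left (neg_negPart_le (T j e - h)) h
  calc φ h - ‖φ‖ * ‖(T j e - h)⁻‖ ≤ φ h - φ (T j e - h)⁻ := by
        gcongr; exact (Real.le_norm_self _).trans (φ.le_opNorm _)
    _ = φ (h - (T j e - h)⁻) := (map_sub φ _ _).symm
    _ ≤ φ (T j |e|) := hφ hle

lemma mul_norm_le_ultralimitNorm (hT : ∀ᶠ j in U, ‖T j‖ ≤ M) (hφ : Monotone φ) {h : E}
    (hlb : ∀ e : E, 0 ≤ e → ‖e‖ = 1 → Tendsto (fun j => ‖(T j e - h)⁻‖) U (𝓝 0)) (f : E) :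
    φ h * ‖f‖ ≤ ultralimitNorm U φ T f := by
  rcases eq_or_ne f 0 with rfl | hf
  · simpa using (ultralimitNorm_smul (φ := φ) hT 0 0).ge
  have hnorm : 0 < ‖f‖ := norm_pos_iff.2 hf
  set e := ‖f‖⁻¹ • |f|
  have he : 0 ≤ e := smul_nonneg (inv_nonneg.2 hnorm.le) (abs_nonneg f)
  have he1 : ‖e‖ = 1 := by
    rw [norm_smul, norm_inv, norm_norm, norm_abs_eq_norm, inv_mul_cancel₀ hnorm.ne']
  calc φ h * ‖f‖ ≤ ultralimitNorm U φ T e * |‖f‖| := by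
        rw [abs_of_pos hnorm]; gcongr; exact apply_le_ultralimitNorm hT hφ he (hlb e he he1)
    _ = ultralimitNorm U φ T f := by
        rw [mul_comm, ← ultralimitNorm_smul hT, smul_inv_smul₀ hnorm.ne', ultralimitNorm_abs]

end Renorming

section ALRenorming

variable {E : Type*} [NormedAddCommGroup E] [Lattice E] [HasSolidNorm E] [IsOrderedAddMonoid E]
  [NormedSpace ℝ E]

def IsEquivalentALNorm (n : E → ℝ) : Prop :=
  (∃ c₁ > (0:ℝ), ∃ c₂ > (0:ℝ), ∀ f : E, c₁ * ‖f‖ ≤ n f ∧ n f ≤ c₂ * ‖f‖) ∧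
  (∀ f g : E, n (f + g) ≤ n f + n g) ∧
  (∀ (a : ℝ) (f : E), n (a • f) = |a| * n f) ∧
  (∀ f g : E, |f| ≤ |g| → n f ≤ n g) ∧
  (∀ f g : E, 0 ≤ f → 0 ≤ g → n (f + g) = n f + n g)

theorem exists_isEquivalentALNorm_of_lower_bound {ι : Type*} {L : Filter ι} [L.NeBot]
    {T : ι → E →L[ℝ] E} (hpos : ∀ᶠ j in L, ∀ f, 0 ≤ f → 0 ≤ T j f) {M : ℝ}
    (hT : ∀ᶠ j in L, ‖T j‖ ≤ M) {h : E} (hh : 0 ≤ h) (hh0 : h ≠ 0)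
    (hlb : ∀ f, 0 ≤ f → ‖f‖ = 1 → Tendsto (fun j => ‖(T j f - h)⁻‖) L (𝓝 0)) :
    ∃ n : E → ℝ, IsEquivalentALNorm n := by
  obtain ⟨φ, hφ, hφ1, hφh⟩ := exists_monotone_dual_vector hh
  have hUL : ↑(Ultrafilter.of L) ≤ L := Ultrafilter.of_le L
  have hTU : ∀ᶠ j in (Ultrafilter.of L : Filter ι), ‖T j‖ ≤ M := hUL hT
  have hposU : ∀ᶠ j in (Ultrafilter.of L : Filter ι), ∀ f, 0 ≤ f → 0 ≤ T j f := hUL hpos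
  obtain ⟨j, hj⟩ := hTU.exists
  have hM : 0 ≤ M := (norm_nonneg _).trans hj
  refine ⟨ultralimitNorm (Ultrafilter.of L) φ T,
    ⟨‖h‖, norm_pos_iff.2 hh0, M + 1, by positivity, fun f => ⟨?_, ?_⟩⟩,
    ultralimitNorm_add_le hTU hposU hφ, ultralimitNorm_smul hTU,
    fun _ _ => ultralimitNorm_mono hTU hposU hφ, fun _ _ => ultralimitNorm_add_of_nonneg hTU⟩
  · rw [← hφh]
    exact mul_norm_le_ultralimitNorm hTU hφ (fun e he he1 => (hlb e he he1).mono_left hUL) f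
  · calc ultralimitNorm (Ultrafilter.of L) φ T f ≤ ‖φ‖ * M * ‖f‖ := ultralimitNorm_le hTU f
      _ ≤ (M + 1) * ‖f‖ := by gcongr; nlinarith

end ALRenorming

theorem al_renorming_of_lower_bound_general
    {E : Type*} [NormedAddCommGroup E] [Lattice E] [HasSolidNorm E] [IsOrderedAddMonoid E] [NormedSpace ℝ E] :
    -- the time-discrete case `J = ℕ`
    (∀ S : E →L[ℝ] E,
      (∀ f : E, 0 ≤ f → 0 ≤ S f) → (∃ M : ℝ, ∀ n : ℕ, ‖S ^ n‖ ≤ M) →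
      (∃ h : E, 0 ≤ h ∧ h ≠ 0 ∧ ∀ f : E, 0 ≤ f → ‖f‖ = 1 →
        Tendsto (fun n : ℕ => ‖((S ^ n) f - h)⁻‖) atTop (𝓝 0)) →
      ∃ n₁ : E → ℝ,
        (∃ c₁ > (0:ℝ), ∃ c₂ > (0:ℝ), ∀ f : E, c₁ * ‖f‖ ≤ n₁ f ∧ n₁ f ≤ c₂ * ‖f‖) ∧
        (∀ f g : E, n₁ (f + g) ≤ n₁ f + n₁ g) ∧
        (∀ (a : ℝ) (f : E), n₁ (a • f) = |a| * n₁ f) ∧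
        (∀ f g : E, |f| ≤ |g| → n₁ f ≤ n₁ g) ∧
        (∀ f g : E, 0 ≤ f → 0 ≤ g → n₁ (f + g) = n₁ f + n₁ g)) ∧
    -- the case `J = (0, ∞)`
    (∀ T : ℝ → E →L[ℝ] E,
      (∀ s t : ℝ, 0 < s → 0 < t → T (s + t) = (T s).comp (T t)) →
      (∀ t : ℝ, 0 < t → ∀ f : E, 0 ≤ f → 0 ≤ T t f) →
      (∃ M : ℝ, ∀ t : ℝ, 0 < t → ‖T t‖ ≤ M) →
      (∃ h : E, 0 ≤ h ∧ h ≠ 0 ∧ ∀ f : E, 0 ≤ f → ‖f‖ = 1 →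
        Tendsto (fun t : ℝ => ‖(T t f - h)⁻‖) atTop (𝓝 0)) →
      ∃ n₁ : E → ℝ,
        (∃ c₁ > (0:ℝ), ∃ c₂ > (0:ℝ), ∀ f : E, c₁ * ‖f‖ ≤ n₁ f ∧ n₁ f ≤ c₂ * ‖f‖) ∧
        (∀ f g : E, n₁ (f + g) ≤ n₁ f + n₁ g) ∧
        (∀ (a : ℝ) (f : E), n₁ (a • f) = |a| * n₁ f) ∧
        (∀ f g : E, |f| ≤ |g| → n₁ f ≤ n₁ g) ∧
        (∀ f g : E, 0 ≤ f → 0 ≤ g → n₁ (f + g) = n₁ f + n₁ g)) := by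
  refine ⟨fun S hS ⟨M, hM⟩ ⟨h, hh, hh0, hlb⟩ => ?_, fun T _ hT ⟨M, hM⟩ ⟨h, hh, hh0, hlb⟩ => ?_⟩
  · exact exists_isEquivalentALNorm_of_lower_bound
      (.of_forall fun n _ => pow_apply_nonneg hS n) (.of_forall hM) hh hh0 hlb
  · have hJ : ∀ᶠ t in atTop, (0 : ℝ) < t := eventually_gt_atTop 0
    exact exists_isEquivalentALNorm_of_lower_bound (hJ.mono hT) (hJ.mono hM) hh hh0 hlb

/-- If a bounded positive semigroup on a Banach lattice admits a non-zero lower bound,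
then the Banach lattice carries an equivalent lattice norm which is additive on the
positive cone, i.e. it is (with that norm) an AL-space.  Both the time-discrete case
`J = ℕ` and the case `J = (0,∞)` are covered. -/
theorem al_renorming_of_lower_bound
    {E : Type*} [NormedAddCommGroup E] [Lattice E] [HasSolidNorm E] [IsOrderedAddMonoid E] [NormedSpace ℝ E] [CompleteSpace E] :
    -- the time-discrete case `J = ℕ`
    (∀ S : E →L[ℝ] E,
      (∀ f : E, 0 ≤ f → 0 ≤ S f) → (∃ M : ℝ, ∀ n : ℕ, ‖S ^ n‖ ≤ M) →
      (∃ h : E, 0 ≤ h ∧ h ≠ 0 ∧ ∀ f : E, 0 ≤ f → ‖f‖ = 1 →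
        Tendsto (fun n : ℕ => ‖((S ^ n) f - h)⁻‖) atTop (𝓝 0)) →
      ∃ n₁ : E → ℝ,
        (∃ c₁ > (0:ℝ), ∃ c₂ > (0:ℝ), ∀ f : E, c₁ * ‖f‖ ≤ n₁ f ∧ n₁ f ≤ c₂ * ‖f‖) ∧
        (∀ f g : E, n₁ (f + g) ≤ n₁ f + n₁ g) ∧
        (∀ (a : ℝ) (f : E), n₁ (a • f) = |a| * n₁ f) ∧
        (∀ f g : E, |f| ≤ |g| → n₁ f ≤ n₁ g) ∧
        (∀ f g : E, 0 ≤ f → 0 ≤ g → n₁ (f + g) = n₁ f + n₁ g)) ∧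
    -- the case `J = (0, ∞)`
    (∀ T : ℝ → E →L[ℝ] E,
      (∀ s t : ℝ, 0 < s → 0 < t → T (s + t) = (T s).comp (T t)) →
      (∀ t : ℝ, 0 < t → ∀ f : E, 0 ≤ f → 0 ≤ T t f) →
      (∃ M : ℝ, ∀ t : ℝ, 0 < t → ‖T t‖ ≤ M) →
      (∃ h : E, 0 ≤ h ∧ h ≠ 0 ∧ ∀ f : E, 0 ≤ f → ‖f‖ = 1 →
        Tendsto (fun t : ℝ => ‖(T t f - h)⁻‖) atTop (𝓝 0)) →
      ∃ n₁ : E → ℝ,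
        (∃ c₁ > (0:ℝ), ∃ c₂ > (0:ℝ), ∀ f : E, c₁ * ‖f‖ ≤ n₁ f ∧ n₁ f ≤ c₂ * ‖f‖) ∧
        (∀ f g : E, n₁ (f + g) ≤ n₁ f + n₁ g) ∧
        (∀ (a : ℝ) (f : E), n₁ (a • f) = |a| * n₁ f) ∧
        (∀ f g : E, |f| ≤ |g| → n₁ f ≤ n₁ g) ∧
        (∀ f g : E, 0 ≤ f → 0 ≤ g → n₁ (f + g) = n₁ f + n₁ g)) :=
  al_renorming_of_lower_bound_general
end

section
/- There exists a Markov operator T on ℓ¹(ℕ₀) such that: the fixed space of T is spanned by e₀; for every 0 < f ∈ ℓ¹ there is c_f > 0 with T^n f ≥ c_f e₀ for all n ∈ ℕ (so each orbit has a non-zero individual lower bound); yet no subsequence of (T^n) converges weakly. Explicitly, with h := (2^{-n})_{n≥0} ∈ ℓ^∞, M the multiplication operator with symbol 1 − h, and S the right shift, the operator Tf := ⟨h,f⟩ e₀ + SMf has these properties; in particular T^n e₁ = (1−c_n)e₀ + c_n e_{n+1} where c_n = ∏_{k=1}^n (1 − 2^{-k}). -/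
/-!
`T` is the transition operator of the Markov chain on `ℕ` that jumps from `k` to `0` with
probability `h k = 2⁻ᵏ` and moves to `k + 1` otherwise. Since `h 0 = 1`, mass at `0` stays
there, so `n ↦ (Tⁿ f)₀` is non-decreasing for `f ≥ 0`: this gives the individual lower bounds,
and a fixed point must vanish off `0`. But `∏ₖ (1 - 2⁻ᵏ) ≥ 1/4`, so a quarter of the mass of
`e₁` escapes to infinity: a weak limit of `T^{νⱼ} e₁` would vanish off `0` (test against the
coordinate functionals), while the functional `x ↦ ∑ₖ xₖ - x₀` stays `≥ 1/4` along the orbit.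
-/

open Filter Topology
open scoped lp unitInterval

noncomputable section

lemma Summable.unitInterval_mul {ι : Type*} {a : ι → ℝ} (ha : Summable a) (x : ι → I) :
    Summable fun i => (x i : ℝ) * a i :=
  (summable_abs_iff.2 ha).of_norm_bounded fun i => by
    rw [Real.norm_eq_abs, abs_mul, abs_of_nonneg (unitInterval.nonneg (x i))]
    exact mul_le_of_le_one_left (abs_nonneg _) (unitInterval.le_one (x i))

lemma Summable.one_sub_unitInterval_mul {ι : Type*} {a : ι → ℝ} (ha : Summable a) (x : ι → I) :
    Summable fun i => (1 - (x i : ℝ)) * a i := by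
  simpa only [unitInterval.coe_symm_eq] using ha.unitInterval_mul fun i => σ (x i)

/-- Written with `if` so that the explicit formula of the theorem holds by `rfl`. -/
def resetShiftSeq (h : ℕ → I) (a : ℕ → ℝ) (k : ℕ) : ℝ :=
  if k = 0 then ∑' j, (h j : ℝ) * a j else (1 - (h (k - 1) : ℝ)) * a (k - 1)

namespace resetShiftSeq

variable {h : ℕ → I} {a : ℕ → ℝ}

@[simp]
lemma apply_zero : resetShiftSeq h a 0 = ∑' j, (h j : ℝ) * a j := rfl

@[simp]
lemma apply_succ (k : ℕ) : resetShiftSeq h a (k + 1) = (1 - (h k : ℝ)) * a k := rfl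

lemma summable (ha : Summable a) : Summable (resetShiftSeq h a) :=
  (summable_nat_add_iff 1).1 (by simpa using ha.one_sub_unitInterval_mul h)

lemma tsum_eq (ha : Summable a) : ∑' k, resetShiftSeq h a k = ∑' k, a k :=
  calc ∑' k, resetShiftSeq h a k
      = ∑' j, (h j : ℝ) * a j + ∑' j, (1 - (h j : ℝ)) * a j := by
        rw [(summable ha).tsum_eq_zero_add]; simp
    _ = ∑' j, ((h j : ℝ) * a j + (1 - (h j : ℝ)) * a j) :=
        ((ha.unitInterval_mul h).tsum_add (ha.one_sub_unitInterval_mul h)).symm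
    _ = ∑' k, a k := tsum_congr fun j => by ring

lemma nonneg (ha : ∀ j, 0 ≤ a j) (k : ℕ) : 0 ≤ resetShiftSeq h a k := by
  cases k with
  | zero => exact tsum_nonneg fun j => mul_nonneg (unitInterval.nonneg (h j)) (ha j)
  | succ k => exact mul_nonneg (unitInterval.one_minus_nonneg (h k)) (ha k)

lemma abs_le (ha : Summable a) (k : ℕ) :
    |resetShiftSeq h a k| ≤ resetShiftSeq h (fun j => |a j|) k := by
  cases k with
  | zero =>
    have habs : ∀ j, ‖(h j : ℝ) * a j‖ = (h j : ℝ) * |a j| := fun j => by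
      rw [Real.norm_eq_abs, abs_mul, abs_of_nonneg (unitInterval.nonneg (h j))]
    have hsum : Summable fun j => ‖(h j : ℝ) * a j‖ := by
      simpa only [habs] using (summable_abs_iff.2 ha).unitInterval_mul h
    simpa only [apply_zero, Real.norm_eq_abs, habs] using norm_tsum_le_tsum_norm hsum
  | succ k => simp [abs_mul, abs_of_nonneg (unitInterval.one_minus_nonneg (h k))]

end resetShiftSeq

namespace lp

variable {α : Type*} {E : α → Type*} [∀ i, NormedAddCommGroup (E i)] {p : ENNReal}

/-- `simp` does not reach this through `lp.coeFn_add` and `Pi.add_apply`. -/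
@[simp]
lemma add_apply (f g : lp E p) (i : α) : (f + g) i = f i + g i := rfl

lemma norm_eq_tsum_abs (f : ℓ¹(α, ℝ)) : ‖f‖ = ∑' k, |f k| := by
  simpa using norm_eq_tsum_rpow (p := 1) (by norm_num) f

end lp

section ResetShift

variable (h : ℕ → I)

lemma memℓp_resetShiftSeq (f : ℓ¹(ℕ, ℝ)) : Memℓp (resetShiftSeq h f) 1 := by
  have hf := (lp.memℓp f).summable_of_one
  refine (memℓp_gen_iff (by norm_num)).2 ?_
  simpa using (resetShiftSeq.summable (summable_abs_iff.2 hf)).of_nonneg_of_le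
    (fun k => abs_nonneg _) (resetShiftSeq.abs_le hf)

def resetShiftₗ : ℓ¹(ℕ, ℝ) →ₗ[ℝ] ℓ¹(ℕ, ℝ) where
  toFun f := ⟨resetShiftSeq h f, memℓp_resetShiftSeq h f⟩
  map_add' f g := by
    ext (_ | k)
    · change ∑' j, (h j : ℝ) * (f j + g j) = ∑' j, (h j : ℝ) * f j + ∑' j, (h j : ℝ) * g j
      simpa only [mul_add] using ((lp.memℓp f).summable_of_one.unitInterval_mul h).tsum_add
        ((lp.memℓp g).summable_of_one.unitInterval_mul h)
    · change (1 - (h k : ℝ)) * (f k + g k) = (1 - (h k : ℝ)) * f k + (1 - (h k : ℝ)) * g k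
      ring
  map_smul' c f := by
    ext (_ | k)
    · change ∑' j, (h j : ℝ) * (c * f j) = c * ∑' j, (h j : ℝ) * f j
      simp only [mul_left_comm _ c, tsum_mul_left]
    · change (1 - (h k : ℝ)) * (c * f k) = c * ((1 - (h k : ℝ)) * f k)
      ring

lemma norm_resetShiftₗ_le (f : ℓ¹(ℕ, ℝ)) : ‖resetShiftₗ h f‖ ≤ ‖f‖ := by
  have hf := (lp.memℓp f).summable_of_one
  have hTf : Summable fun k => |resetShiftSeq h f k| := by
    simpa using (memℓp_resetShiftSeq h f).summable (by norm_num)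
  calc ‖resetShiftₗ h f‖ = ∑' k, |resetShiftSeq h f k| := lp.norm_eq_tsum_abs _
    _ ≤ ∑' k, resetShiftSeq h (fun j => |f j|) k :=
        hTf.tsum_le_tsum (resetShiftSeq.abs_le hf) (resetShiftSeq.summable (summable_abs_iff.2 hf))
    _ = ‖f‖ := by rw [resetShiftSeq.tsum_eq (summable_abs_iff.2 hf), lp.norm_eq_tsum_abs]

def resetShift : ℓ¹(ℕ, ℝ) →L[ℝ] ℓ¹(ℕ, ℝ) :=
  (resetShiftₗ h).mkContinuous 1 fun f => by simpa using norm_resetShiftₗ_le h f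

end ResetShift

namespace resetShift

variable {h : ℕ → I} {f : ℓ¹(ℕ, ℝ)}

lemma apply (k : ℕ) : resetShift h f k = resetShiftSeq h f k := rfl

lemma nonneg (hf : ∀ k, 0 ≤ f k) (k : ℕ) : 0 ≤ resetShift h f k :=
  resetShiftSeq.nonneg hf k

lemma pow_nonneg (hf : ∀ k, 0 ≤ f k) (n k : ℕ) : 0 ≤ (resetShift h ^ n) f k := by
  induction n generalizing k with
  | zero => exact hf k
  | succ n ih => rw [pow_succ', mul_apply_eq_comp]; exact nonneg ih k

lemma norm_eq_of_nonneg (hf : ∀ k, 0 ≤ f k) : ‖resetShift h f‖ = ‖f‖ := by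
  have hf_sum := (lp.memℓp f).summable_of_one
  rw [lp.norm_eq_tsum_abs, lp.norm_eq_tsum_abs]
  simp only [abs_of_nonneg (nonneg hf _), abs_of_nonneg (hf _)]
  exact resetShiftSeq.tsum_eq hf_sum

lemma coe_mul_le_apply_zero (hf : ∀ k, 0 ≤ f k) (j : ℕ) : (h j : ℝ) * f j ≤ resetShift h f 0 :=
  ((lp.memℓp f).summable_of_one.unitInterval_mul h).le_tsum j
    fun i _ => mul_nonneg (unitInterval.nonneg (h i)) (hf i)

lemma apply_zero_pos (h_pos : ∀ j, 0 < h j) (hf : ∀ k, 0 ≤ f k) (hf_ne : f ≠ 0) :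
    0 < resetShift h f 0 := by
  obtain ⟨j, hj⟩ : ∃ j, f j ≠ 0 := by
    by_contra! hzero
    exact hf_ne (lp.ext (funext hzero))
  exact ((lp.memℓp f).summable_of_one.unitInterval_mul h).tsum_pos
    (fun i => mul_nonneg (unitInterval.nonneg (h i)) (hf i)) j
    (mul_pos (h_pos j) ((hf j).lt_of_ne' hj))

lemma apply_zero_le_pow_apply_zero (h_zero : h 0 = 1) (hf : ∀ k, 0 ≤ f k) {n : ℕ} (hn : 1 ≤ n) :
    resetShift h f 0 ≤ (resetShift h ^ n) f 0 := by
  induction n, hn using Nat.le_induction with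
  | base => rfl
  | succ n _ ih =>
    calc resetShift h f 0 ≤ (resetShift h ^ n) f 0 := ih
      _ = (h 0 : ℝ) * (resetShift h ^ n) f 0 := by rw [h_zero, Set.Icc.coe_one, one_mul]
      _ ≤ (resetShift h ^ (n + 1)) f 0 := by
        rw [pow_succ', mul_apply_eq_comp]
        exact coe_mul_le_apply_zero (pow_nonneg hf n) 0

lemma eq_smul_single_zero_of_apply_eq_self (h_zero : h 0 = 1) (hfix : resetShift h f = f) :
    f = f 0 • lp.single 1 0 (1 : ℝ) := by
  have hcoord (k : ℕ) : f (k + 1) = (1 - (h k : ℝ)) * f k := by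
    rw [← resetShiftSeq.apply_succ, ← apply, hfix]
  have hvanish (k : ℕ) : f (k + 1) = 0 := by
    induction k with
    | zero => rw [hcoord, h_zero, Set.Icc.coe_one, sub_self, zero_mul]
    | succ k ih => rw [hcoord, ih, mul_zero]
  ext k
  cases k with
  | zero => simp
  | succ k => simp [hvanish, lp.single_apply]

lemma apply_single (m : ℕ) :
    resetShift h (lp.single 1 m (1 : ℝ)) =
      (h m : ℝ) • lp.single 1 0 (1 : ℝ) + (1 - (h m : ℝ)) • lp.single 1 (m + 1) (1 : ℝ) := by
  ext k
  cases k with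
  | zero =>
    rw [apply, resetShiftSeq.apply_zero, tsum_eq_single m fun j hj => by simp [lp.single_apply, hj]]
    simp [lp.single_apply]
  | succ k =>
    rcases eq_or_ne k m with rfl | hkm
    · simp [apply, lp.single_apply]
    · simp [apply, lp.single_apply, hkm]

end resetShift

/-- The probability that the chain started in `1` has not returned to `0` after `n` steps. -/
def survivalProb (h : ℕ → I) (n : ℕ) : ℝ := ∏ k ∈ Finset.Icc 1 n, (1 - (h k : ℝ))

lemma survivalProb_succ (h : ℕ → I) (n : ℕ) :
    survivalProb h (n + 1) = survivalProb h n * (1 - (h (n + 1) : ℝ)) :=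
  Finset.prod_Icc_succ_top (by omega) _

namespace resetShift

variable {h : ℕ → I}

lemma pow_apply_single_one (h_zero : h 0 = 1) (n : ℕ) :
    (resetShift h ^ n) (lp.single 1 1 (1 : ℝ)) =
      (1 - survivalProb h n) • lp.single 1 0 (1 : ℝ) +
        survivalProb h n • lp.single 1 (n + 1) (1 : ℝ) := by
  induction n with
  | zero => simp [survivalProb]
  | succ n ih =>
    rw [pow_succ', mul_apply_eq_comp, ih, map_add, map_smul, map_smul, apply_single,
      apply_single, survivalProb_succ, h_zero, Set.Icc.coe_one]
    module

lemma not_weakly_tendsto_pow_apply_single_one (h_zero : h 0 = 1) {δ : ℝ} (hδ : 0 < δ)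
    (hsurv : ∀ n, δ ≤ survivalProb h n) {ν : ℕ → ℕ} (hν : Tendsto ν atTop atTop)
    (y : ℓ¹(ℕ, ℝ)) :
    ¬ ∀ φ : ℓ¹(ℕ, ℝ) →L[ℝ] ℝ,
      Tendsto (fun j => φ ((resetShift h ^ ν j) (lp.single 1 1 (1 : ℝ)))) atTop (𝓝 (φ y)) := by
  intro hweak
  have hy_succ (k : ℕ) : y (k + 1) = 0 := by
    refine tendsto_nhds_unique (hweak (lp.evalCLM ℝ _ 1 (k + 1))) (tendsto_const_nhds.congr' ?_)
    filter_upwards [hν.eventually_gt_atTop k] with j hj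
    simp [lp.evalCLM, pow_apply_single_one h_zero, lp.single_apply, hj.ne']
  set φ := lp.tsumCLM ℝ ℕ ℝ - lp.evalCLM ℝ _ 1 0
  have hφ_orbit (n : ℕ) : φ ((resetShift h ^ n) (lp.single 1 1 (1 : ℝ))) = survivalProb h n := by
    rw [pow_apply_single_one h_zero, map_add, map_smul, map_smul]
    simp [φ, lp.evalCLM, lp.single_apply, tsum_pi_single]
  have hφ_y : φ y = 0 := by
    simp [φ, lp.evalCLM, tsum_eq_single 0 fun k hk => by
      obtain ⟨k, rfl⟩ := Nat.exists_eq_succ_of_ne_zero hk; exact hy_succ k]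
  have hδ_le : δ ≤ φ y :=
    ge_of_tendsto (hweak φ) (.of_forall fun j => (hφ_orbit (ν j)).ge.trans' (hsurv _))
  linarith

end resetShift

def halfPow (j : ℕ) : I := ⟨2⁻¹ ^ j, by positivity, pow_le_one₀ (by norm_num) (by norm_num)⟩

lemma halfPow_zero : halfPow 0 = 1 := Subtype.ext (pow_zero _)

lemma halfPow_pos (j : ℕ) : 0 < halfPow j := by
  change (0 : ℝ) < 2⁻¹ ^ j
  positivity

lemma quarter_add_le_survivalProb_halfPow_succ (n : ℕ) :
    1 / 4 + (2⁻¹ : ℝ) ^ (n + 2) ≤ survivalProb halfPow (n + 1) := by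
  induction n with
  | zero => norm_num [survivalProb, halfPow]
  | succ n ih =>
    set x : ℝ := 2⁻¹ ^ (n + 2)
    have hx : x ≤ 2⁻¹ ^ 2 := pow_le_pow_of_le_one (by norm_num) (by norm_num) (by omega)
    norm_num at hx
    have hx_pos : 0 < x := by positivity
    have hcoe : ((halfPow (n + 2) : I) : ℝ) = x := rfl
    rw [survivalProb_succ, hcoe, show (2⁻¹ : ℝ) ^ (n + 1 + 2) = x * 2⁻¹ from pow_succ _ _]
    nlinarith [mul_le_mul_of_nonneg_right ih (by linarith : 0 ≤ 1 - x)]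

lemma quarter_le_survivalProb_halfPow (n : ℕ) : 1 / 4 ≤ survivalProb halfPow n := by
  cases n with
  | zero => norm_num [survivalProb]
  | succ n =>
    have := quarter_add_le_survivalProb_halfPow_succ n
    have : (0 : ℝ) < 2⁻¹ ^ (n + 2) := by positivity
    linarith

end

/-- There is a Markov operator `T` on `ℓ¹(ℕ₀)` — explicitly, with `h = (2^{-n})_n`,
`M` multiplication by `1 - h` and `S` the right shift, `T f = ⟨h, f⟩ e₀ + S M f` —
whose fixed space is spanned by `e₀`, such that every positive non-zero `f` admits the
individual lower bound `c_f e₀` with `c_f > 0` (i.e. `T^n f ≥ c_f e₀` for all `n ≥ 1`),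
with `T^n e₁ = (1 - c_n) e₀ + c_n e_{n+1}` where `c_n = ∏_{k=1}^n (1 - 2^{-k})`, and yet
no subsequence of `(T^n)` converges weakly. -/
theorem exists_markov_operator_with_individual_lower_bounds_but_no_weak_convergence :
    ∃ T : lp (fun _ : ℕ => ℝ) 1 →L[ℝ] lp (fun _ : ℕ => ℝ) 1,
      -- explicit formula: `T f = ⟨h, f⟩ e₀ + S M f`
      (∀ (f : lp (fun _ : ℕ => ℝ) 1) (k : ℕ),
        T f k = if k = 0 then ∑' j : ℕ, (2:ℝ)⁻¹ ^ j * f j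
                else (1 - (2:ℝ)⁻¹ ^ (k - 1)) * f (k - 1)) ∧
      -- `T` is positive
      (∀ f : lp (fun _ : ℕ => ℝ) 1, (∀ k, 0 ≤ f k) → ∀ k, 0 ≤ T f k) ∧
      -- `T` is a Markov operator
      (∀ f : lp (fun _ : ℕ => ℝ) 1, (∀ k, 0 ≤ f k) → ‖T f‖ = ‖f‖) ∧
      -- the fixed space of `T` is spanned by `e₀`
      (∀ f : lp (fun _ : ℕ => ℝ) 1, T f = f → ∃ c : ℝ, f = c • lp.single 1 0 (1:ℝ)) ∧
      -- individual lower bounds `c_f e₀`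
      (∀ f : lp (fun _ : ℕ => ℝ) 1, (∀ k, 0 ≤ f k) → f ≠ 0 →
        ∃ c > (0:ℝ), ∀ n : ℕ, 1 ≤ n →
          (c ≤ (T ^ n) f 0 ∧ ∀ k, 0 ≤ (T ^ n) f k)) ∧
      -- explicit orbit of `e₁`
      (∀ n : ℕ, (T ^ n) (lp.single 1 1 (1:ℝ)) =
          (1 - ∏ k ∈ Finset.Icc 1 n, (1 - (2:ℝ)⁻¹ ^ k)) • lp.single 1 0 (1:ℝ) +
          (∏ k ∈ Finset.Icc 1 n, (1 - (2:ℝ)⁻¹ ^ k)) • lp.single 1 (n + 1) (1:ℝ)) ∧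
      -- no subsequence of `(T^n)` converges weakly
      (∀ ν : ℕ → ℕ, StrictMono ν →
        ¬ ∃ Q : lp (fun _ : ℕ => ℝ) 1 → lp (fun _ : ℕ => ℝ) 1,
          ∀ (f : lp (fun _ : ℕ => ℝ) 1) (φ : lp (fun _ : ℕ => ℝ) 1 →L[ℝ] ℝ),
            Tendsto (fun j : ℕ => φ ((T ^ ν j) f)) atTop (𝓝 (φ (Q f)))) := by
  refine ⟨resetShift halfPow, fun f k => rfl, fun f => resetShift.nonneg,
    fun f => resetShift.norm_eq_of_nonneg,
    fun f hfix => ⟨f 0, resetShift.eq_smul_single_zero_of_apply_eq_self halfPow_zero hfix⟩,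
    fun f hf hf_ne => ⟨_, resetShift.apply_zero_pos halfPow_pos hf hf_ne, fun n hn =>
      ⟨resetShift.apply_zero_le_pow_apply_zero halfPow_zero hf hn, resetShift.pow_nonneg hf n⟩⟩,
    resetShift.pow_apply_single_one halfPow_zero, fun ν hν ⟨Q, hQ⟩ => ?_⟩
  exact resetShift.not_weakly_tendsto_pow_apply_single_one halfPow_zero
    (by norm_num : (0 : ℝ) < 1 / 4) quarter_le_survivalProb_halfPow hν.tendsto_atTop _ (hQ _)
end
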